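/- arXiv:2211.09221 — 6 statements merged into one kernel-verified Lean document; each statement's English description precedes it below -/
import Mathlib

section
/- Let G = {G_1,…,G_m} be a group structure on [p] with positive weights w, let 𝒢 = {𝒢_1,…,𝒢_𝓂} be its overlapping-induced partition with weights 𝓌_𝓰 = Σ_{g∈F(𝓰)} w_g, and let φ^G and ψ^𝒢 be the corresponding norms. Then there do not exist exponents 0 ≤ q₁, q₂ ≤ ∞, a partition G̃ of [p] into nonempty blocks, and positive weights w̃ such that both (i) φ^G(β) ≤ ‖β‖_{(G̃,w̃),q₁,q₂} ≤ ψ^𝒢(β) for all β ∈ ℝ^p, and (ii) ‖β‖_{(G̃,w̃),q₁,q₂} < ψ^𝒢(β) for some β ∈ ℝ^p. In other words, ψ^𝒢 is the tightest separable relaxation of φ^G among weighted ℓ_{q₁}/ℓ_{q₂} norms over partitions of [p]. -/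
open Finset
open scoped ENNReal NNReal

/-- Euclidean norm of the subvector of `β` indexed by `T`. -/
noncomputable def subNorm {p : ℕ} (T : Finset (Fin p)) (β : Fin p → ℝ) : ℝ :=
  Real.sqrt (∑ j ∈ T, (β j) ^ 2)

/-- Overlapping group lasso norm `φ^G`. -/
noncomputable def glNorm {p m : ℕ} (G : Fin m → Finset (Fin p)) (w : Fin m → ℝ)
    (β : Fin p → ℝ) : ℝ :=
  ∑ g, w g * subNorm (G g) β

/-- `Gi` is the overlapping-induced partition of `[p]` associated with the group
structure `G`: its blocks are nonempty, pairwise disjoint, cover `[p]`, and two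
coordinates lie in a common block iff they have identical group membership. -/
def IsInducedPartition {p m M : ℕ} (G : Fin m → Finset (Fin p))
    (Gi : Fin M → Finset (Fin p)) : Prop :=
  (∀ a, (Gi a).Nonempty) ∧
  (∀ a b : Fin M, a ≠ b → Disjoint (Gi a) (Gi b)) ∧
  (∀ j : Fin p, ∃ a, j ∈ Gi a) ∧
  (∀ j k : Fin p, (∃ a, j ∈ Gi a ∧ k ∈ Gi a) ↔ (∀ g, j ∈ G g ↔ k ∈ G g))

/-- The induced weights `𝓌_𝓰 = Σ_{g ∈ F(𝓰)} w_g`, where `F(𝓰) = {g : 𝒢_𝓰 ⊆ G_g}`. -/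
noncomputable def inducedWeight {p m M : ℕ} (G : Fin m → Finset (Fin p)) (w : Fin m → ℝ)
    (Gi : Fin M → Finset (Fin p)) (a : Fin M) : ℝ :=
  ∑ g ∈ univ.filter (fun g => Gi a ⊆ G g), w g

/-- The proposed separable norm `ψ^𝒢`. -/
noncomputable def psiNorm {p m M : ℕ} (G : Fin m → Finset (Fin p)) (w : Fin m → ℝ)
    (Gi : Fin M → Finset (Fin p)) (β : Fin p → ℝ) : ℝ :=
  ∑ a, inducedWeight G w Gi a * subNorm (Gi a) β

/-- The `ℓ_{q₂}` norm of the subvector of `β` indexed by `T`, for `q₂ ∈ [0,∞]`,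
with the usual conventions at `q₂ = 0` (number of nonzero entries) and
`q₂ = ∞` (maximum absolute entry). -/
noncomputable def blockLqNorm {p : ℕ} (q : ℝ≥0∞) (T : Finset (Fin p)) (β : Fin p → ℝ) : ℝ :=
  if q = 0 then ((T.filter fun j => β j ≠ 0).card : ℝ)
  else if q = ⊤ then ⨆ j ∈ T, |β j|
  else (∑ j ∈ T, |β j| ^ q.toReal) ^ (1 / q.toReal)

/-- The weighted `ℓ_{q₁}/ℓ_{q₂}` norm `‖β‖_{(G̃,w̃),q₁,q₂} = (Σ_g w̃_g ‖β_{G̃_g}‖_{q₂}^{q₁})^{1/q₁}`,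
with the usual conventions at `q₁ = 0` and `q₁ = ∞`. -/
noncomputable def lqqNorm {p M : ℕ} (q₁ q₂ : ℝ≥0∞) (Gt : Fin M → Finset (Fin p))
    (wt : Fin M → ℝ) (β : Fin p → ℝ) : ℝ :=
  if q₁ = 0 then ((univ.filter fun g => wt g * blockLqNorm q₂ (Gt g) β ≠ 0).card : ℝ)
  else if q₁ = ⊤ then ⨆ g, wt g * blockLqNorm q₂ (Gt g) β
  else (∑ g, wt g * (blockLqNorm q₂ (Gt g) β) ^ q₁.toReal) ^ (1 / q₁.toReal)


/-! ### auxiliary definitions -/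

/-- one-coordinate vector -/
def sv {p : ℕ} (j : Fin p) (x : ℝ) : Fin p → ℝ := fun i => if i = j then x else 0

/-- two-coordinate vector -/
def pv {p : ℕ} (j k : Fin p) (x y : ℝ) : Fin p → ℝ :=
  fun i => if i = j then x else if i = k then y else 0

/-- `ℓ_q` norm of a pair, for `q ≠ 0`. -/
noncomputable def pairB (q : ℝ≥0∞) (x y : ℝ) : ℝ :=
  if q = ⊤ then max x y else (x ^ q.toReal + y ^ q.toReal) ^ (1 / q.toReal)

lemma pv_comm {p : ℕ} (j k : Fin p) (hjk : j ≠ k) (x y : ℝ) :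
    pv j k x y = pv k j y x := by
  funext i
  unfold pv
  rcases eq_or_ne i j with rfl | hij
  · simp [hjk]
  · simp [hij]

lemma sv_eq_pv {p : ℕ} (j k : Fin p) (hjk : j ≠ k) (x : ℝ) :
    sv j x = pv j k x 0 := by
  funext i
  unfold sv pv
  rcases eq_or_ne i j with rfl | hij
  · simp
  · simp [hij]

lemma toReal_pos {q : ℝ≥0∞} (h0 : q ≠ 0) (ht : q ≠ ⊤) : 0 < q.toReal :=
  ENNReal.toReal_pos h0 ht

/-! ### biSup helpers -/

lemma biSup_le_real {p : ℕ} {T : Finset (Fin p)} {f : Fin p → ℝ} {a : ℝ}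
    (ha : 0 ≤ a) (h : ∀ i ∈ T, f i ≤ a) : (⨆ i ∈ T, f i) ≤ a :=
  Real.iSup_le (fun i => Real.iSup_le (fun hi => h i hi) ha) ha

lemma le_biSup_real {p : ℕ} {T : Finset (Fin p)} {f : Fin p → ℝ} {j : Fin p}
    (hj : j ∈ T) : f j ≤ ⨆ i ∈ T, f i := by
  have h1 : f j ≤ ⨆ _ : j ∈ T, f j :=
    le_ciSup (f := fun _ : j ∈ T => f j) (Set.Finite.bddAbove (Set.finite_range _)) hj
  exact h1.trans (le_ciSup (f := fun i => ⨆ _ : i ∈ T, f i)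
    (Set.Finite.bddAbove (Set.finite_range _)) j)

lemma blockLq_nonneg {p : ℕ} (q : ℝ≥0∞) (T : Finset (Fin p)) (β : Fin p → ℝ) :
    0 ≤ blockLqNorm q T β := by
  unfold blockLqNorm
  split_ifs
  · positivity
  · exact Real.iSup_nonneg fun i => Real.iSup_nonneg fun _ => abs_nonneg _
  · positivity

/-! ### pairB lemmas -/

lemma pairB_nonneg {q : ℝ≥0∞} {x y : ℝ} (hx : 0 ≤ x) (hy : 0 ≤ y) : 0 ≤ pairB q x y := by
  unfold pairB
  split_ifs
  · exact le_max_of_le_left hx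
  · positivity

lemma pairB_x0 {q : ℝ≥0∞} (hq : q ≠ 0) (hqt : q ≠ ⊤ → q.toReal ≠ 0) {x : ℝ} (hx : 0 ≤ x) :
    pairB q x 0 = x := by
  unfold pairB
  split_ifs with h
  · exact max_eq_left hx
  · rw [Real.zero_rpow (hqt h), add_zero, one_div, Real.rpow_rpow_inv hx (hqt h)]

lemma pairB_x0' {q : ℝ≥0∞} (hq : q ≠ 0) {x : ℝ} (hx : 0 ≤ x) : pairB q x 0 = x := by
  refine pairB_x0 hq (fun h => ?_) hx
  exact ne_of_gt (toReal_pos hq h)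

lemma pairB_0y {q : ℝ≥0∞} (hq : q ≠ 0) {y : ℝ} (hy : 0 ≤ y) : pairB q 0 y = y := by
  unfold pairB
  have := pairB_x0' (q := q) hq hy
  unfold pairB at this
  split_ifs with h
  · rw [max_comm]; simpa [h] using this
  · rw [add_comm]; simpa [h] using this

/-! ### evaluation of subNorm on sv and pv -/

lemma subNorm_sv {p : ℕ} (T : Finset (Fin p)) (j : Fin p) (x : ℝ) :
    subNorm T (sv j x) = if j ∈ T then |x| else 0 := by
  unfold subNorm sv
  have h1 : ∀ i ∈ T, (if i = j then x else 0) ^ 2 = if i = j then x ^ 2 else 0 := by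
    intro i _; split_ifs <;> ring
  rw [Finset.sum_congr rfl h1, Finset.sum_ite_eq' T j (fun _ => x ^ 2)]
  split_ifs
  · exact Real.sqrt_sq_eq_abs x
  · exact Real.sqrt_zero

lemma subNorm_pv {p : ℕ} (T : Finset (Fin p)) {j k : Fin p} (hjk : j ≠ k) (x y : ℝ) :
    subNorm T (pv j k x y) =
      Real.sqrt ((if j ∈ T then x ^ 2 else 0) + (if k ∈ T then y ^ 2 else 0)) := by
  unfold subNorm pv
  congr 1
  have h1 : ∀ i ∈ T, (if i = j then x else if i = k then y else 0) ^ 2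
      = (if i = j then x ^ 2 else 0) + (if i = k then y ^ 2 else 0) := by
    intro i _
    rcases eq_or_ne i j with rfl | hij
    · simp [hjk]
    · rcases eq_or_ne i k with rfl | hik
      · simp [hij]
      · simp [hij, hik]
  rw [Finset.sum_congr rfl h1, Finset.sum_add_distrib,
    Finset.sum_ite_eq' T j (fun _ => x ^ 2), Finset.sum_ite_eq' T k (fun _ => y ^ 2)]

lemma subNorm_singleton {p : ℕ} (i : Fin p) (β : Fin p → ℝ) :
    subNorm {i} β = |β i| := by
  unfold subNorm
  rw [Finset.sum_singleton, Real.sqrt_sq_eq_abs]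

/-! ### evaluation of blockLqNorm -/

lemma blockLq_sv {p : ℕ} {q : ℝ≥0∞} (hq : q ≠ 0) (T : Finset (Fin p)) (j : Fin p)
    {x : ℝ} (hx : 0 ≤ x) :
    blockLqNorm q T (sv j x) = if j ∈ T then x else 0 := by
  unfold blockLqNorm
  rw [if_neg hq]
  by_cases ht : q = ⊤
  · rw [if_pos ht]
    by_cases h : j ∈ T
    · rw [if_pos h]
      refine le_antisymm (biSup_le_real hx ?_) ?_
      · intro i _
        unfold sv
        split_ifs with hi
        · subst hi; rw [abs_of_nonneg hx]
        · simp [hx]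
      · have := le_biSup_real (f := fun i => |sv j x i|) h
        simpa [sv, abs_of_nonneg hx] using this
    · rw [if_neg h]
      refine le_antisymm (biSup_le_real le_rfl ?_) ?_
      · intro i hi
        have hij : i ≠ j := fun e => h (e ▸ hi)
        unfold sv
        rw [if_neg hij]
        simp
      · exact Real.iSup_nonneg fun i => Real.iSup_nonneg fun _ => abs_nonneg _
  · rw [if_neg ht]
    have hs : q.toReal ≠ 0 := ne_of_gt (toReal_pos hq ht)
    have h1 : ∀ i ∈ T, |sv j x i| ^ q.toReal = if i = j then x ^ q.toReal else 0 := by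
      intro i _
      unfold sv
      split_ifs with hi
      · rw [abs_of_nonneg hx]
      · rw [abs_zero, Real.zero_rpow hs]
    rw [Finset.sum_congr rfl h1, Finset.sum_ite_eq' T j (fun _ => x ^ q.toReal)]
    by_cases h : j ∈ T
    · rw [if_pos h, if_pos h, one_div, Real.rpow_rpow_inv hx hs]
    · rw [if_neg h, if_neg h, Real.zero_rpow (by simpa using hs)]

lemma blockLq_pv {p : ℕ} {q : ℝ≥0∞} (hq : q ≠ 0) (T : Finset (Fin p)) {j k : Fin p}
    (hjk : j ≠ k) {x y : ℝ} (hx : 0 ≤ x) (hy : 0 ≤ y) :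
    blockLqNorm q T (pv j k x y) =
      pairB q (if j ∈ T then x else 0) (if k ∈ T then y else 0) := by
  unfold blockLqNorm pairB
  rw [if_neg hq]
  by_cases ht : q = ⊤
  · rw [if_pos ht, if_pos ht]
    have hmax : 0 ≤ max (if j ∈ T then x else 0) (if k ∈ T then y else 0) := by
      refine le_max_of_le_left ?_
      split_ifs <;> simp [hx]
    refine le_antisymm (biSup_le_real hmax ?_) ?_
    · intro i hi
      unfold pv
      rcases eq_or_ne i j with rfl | hij
      · rw [if_pos rfl, abs_of_nonneg hx, if_pos hi]
        exact le_max_left _ _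
      · rw [if_neg hij]
        rcases eq_or_ne i k with rfl | hik
        · rw [if_pos rfl, abs_of_nonneg hy, if_pos hi]
          exact le_max_right _ _
        · rw [if_neg hik, abs_zero]
          exact hmax
    · refine max_le ?_ ?_
      · split_ifs with h
        · have := le_biSup_real (f := fun i => |pv j k x y i|) h
          simpa [pv, abs_of_nonneg hx] using this
        · exact Real.iSup_nonneg fun i => Real.iSup_nonneg fun _ => abs_nonneg _
      · split_ifs with h
        · have := le_biSup_real (f := fun i => |pv j k x y i|) h
          simpa [pv, hjk.symm, abs_of_nonneg hy] using this
        · exact Real.iSup_nonneg fun i => Real.iSup_nonneg fun _ => abs_nonneg _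
  · rw [if_neg ht, if_neg ht]
    have hs : q.toReal ≠ 0 := ne_of_gt (toReal_pos hq ht)
    have h1 : ∀ i ∈ T, |pv j k x y i| ^ q.toReal
        = (if i = j then x ^ q.toReal else 0) + (if i = k then y ^ q.toReal else 0) := by
      intro i _
      unfold pv
      rcases eq_or_ne i j with rfl | hij
      · rw [if_pos rfl, if_pos rfl, if_neg hjk, abs_of_nonneg hx, add_zero]
      · rw [if_neg hij, if_neg hij, zero_add]
        rcases eq_or_ne i k with rfl | hik
        · rw [if_pos rfl, if_pos rfl, abs_of_nonneg hy]
        · rw [if_neg hik, if_neg hik, abs_zero, Real.zero_rpow hs]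
    rw [Finset.sum_congr rfl h1, Finset.sum_add_distrib,
      Finset.sum_ite_eq' T j (fun _ => x ^ q.toReal),
      Finset.sum_ite_eq' T k (fun _ => y ^ q.toReal)]
    have e1 : (if j ∈ T then x else 0) ^ q.toReal = if j ∈ T then x ^ q.toReal else 0 := by
      split_ifs with h
      · rfl
      · exact Real.zero_rpow hs
    have e2 : (if k ∈ T then y else 0) ^ q.toReal = if k ∈ T then y ^ q.toReal else 0 := by
      split_ifs with h
      · rfl
      · exact Real.zero_rpow hs
    rw [e1, e2]

lemma blockLq_singleton {p : ℕ} {q : ℝ≥0∞} (hq : q ≠ 0) (i : Fin p) (β : Fin p → ℝ) :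
    blockLqNorm q {i} β = |β i| := by
  unfold blockLqNorm
  rw [if_neg hq]
  by_cases ht : q = ⊤
  · rw [if_pos ht]
    refine le_antisymm (biSup_le_real (abs_nonneg _) ?_) (le_biSup_real (f := fun i' => |β i'|) (Finset.mem_singleton_self i))
    intro i' hi'
    rw [Finset.mem_singleton] at hi'
    subst hi'
    exact le_rfl
  · rw [if_neg ht]
    have hs : q.toReal ≠ 0 := ne_of_gt (toReal_pos hq ht)
    rw [Finset.sum_singleton, one_div, Real.rpow_rpow_inv (abs_nonneg _) hs]

lemma blockLq_two {p : ℕ} {q : ℝ≥0∞} (ht : q ≠ ⊤) (hs : q.toReal = 2)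
    (T : Finset (Fin p)) (β : Fin p → ℝ) :
    blockLqNorm q T β = subNorm T β := by
  have hq : q ≠ 0 := by
    intro h; rw [h] at hs; simp at hs
  unfold blockLqNorm subNorm
  rw [if_neg hq, if_neg ht, hs, Real.sqrt_eq_rpow]
  congr 1
  refine Finset.sum_congr rfl fun i _ => ?_
  rw [show ((2:ℝ)) = ((2:ℕ):ℝ) by norm_num, Real.rpow_natCast, sq_abs]

lemma blockLq_one {p : ℕ} {q : ℝ≥0∞} (ht : q ≠ ⊤) (hs : q.toReal = 1)
    (T : Finset (Fin p)) (β : Fin p → ℝ) :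
    blockLqNorm q T β = ∑ i ∈ T, |β i| := by
  have hq : q ≠ 0 := by
    intro h; rw [h] at hs; simp at hs
  unfold blockLqNorm
  rw [if_neg hq, if_neg ht, hs]
  simp [Real.rpow_one]

/-- effective weight of a block -/
noncomputable def Wq (q₁ : ℝ≥0∞) (w : ℝ) : ℝ :=
  if q₁ = ⊤ then w else w ^ (1 / q₁.toReal)

lemma Wq_pos {q₁ : ℝ≥0∞} {w : ℝ} (hw : 0 < w) : 0 < Wq q₁ w := by
  unfold Wq
  split_ifs
  · exact hw
  · positivity

lemma lqq_congr {p M' : ℕ} (q₁ q₂ : ℝ≥0∞) (Gt : Fin M' → Finset (Fin p))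
    (wt : Fin M' → ℝ) (β₁ β₂ : Fin p → ℝ)
    (h : ∀ g, blockLqNorm q₂ (Gt g) β₁ = blockLqNorm q₂ (Gt g) β₂) :
    lqqNorm q₁ q₂ Gt wt β₁ = lqqNorm q₁ q₂ Gt wt β₂ := by
  unfold lqqNorm
  simp only [h]

lemma lqq_single {p M' : ℕ} {q₁ q₂ : ℝ≥0∞} (hq₁ : q₁ ≠ 0) {Gt : Fin M' → Finset (Fin p)}
    {wt : Fin M' → ℝ} (hwt : ∀ g, 0 < wt g) {β : Fin p → ℝ} (g₀ : Fin M')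
    {V : ℝ} (hV : 0 ≤ V)
    (hbl : ∀ g, blockLqNorm q₂ (Gt g) β = if g = g₀ then V else 0) :
    lqqNorm q₁ q₂ Gt wt β = Wq q₁ (wt g₀) * V := by
  unfold lqqNorm Wq
  rw [if_neg hq₁]
  by_cases ht : q₁ = ⊤
  · rw [if_pos ht, if_pos ht]
    have : Nonempty (Fin M') := ⟨g₀⟩
    refine le_antisymm (ciSup_le fun g => ?_) ?_
    · rw [hbl g]
      split_ifs with h
      · subst h; exact le_rfl
      · rw [mul_zero]
        exact mul_nonneg (hwt g₀).le hV
    · have := le_ciSup (f := fun g => wt g * blockLqNorm q₂ (Gt g) β)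
        (Set.Finite.bddAbove (Set.finite_range _)) g₀
      rwa [hbl g₀, if_pos rfl] at this
  · rw [if_neg ht, if_neg ht]
    have hr : q₁.toReal ≠ 0 := ne_of_gt (toReal_pos hq₁ ht)
    have h1 : ∀ g, wt g * (blockLqNorm q₂ (Gt g) β) ^ q₁.toReal
        = if g = g₀ then wt g₀ * V ^ q₁.toReal else 0 := by
      intro g
      rw [hbl g]
      split_ifs with h
      · subst h; rfl
      · rw [Real.zero_rpow hr, mul_zero]
    rw [Finset.sum_congr rfl (fun g _ => h1 g), Finset.sum_ite_eq' univ g₀, if_pos (Finset.mem_univ _)]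
    rw [Real.mul_rpow (hwt g₀).le (Real.rpow_nonneg hV _), one_div,
      Real.rpow_rpow_inv hV hr]

lemma lqq_double {p M' : ℕ} {q₁ q₂ : ℝ≥0∞} (hq₁ : q₁ ≠ 0) {Gt : Fin M' → Finset (Fin p)}
    {wt : Fin M' → ℝ} (hwt : ∀ g, 0 < wt g) {β : Fin p → ℝ} {g₀ g₁ : Fin M'} (hgg : g₀ ≠ g₁)
    {V₀ V₁ : ℝ} (hV₀ : 0 ≤ V₀) (hV₁ : 0 ≤ V₁)
    (hbl : ∀ g, blockLqNorm q₂ (Gt g) β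
      = (if g = g₀ then V₀ else 0) + (if g = g₁ then V₁ else 0)) :
    lqqNorm q₁ q₂ Gt wt β = pairB q₁ (Wq q₁ (wt g₀) * V₀) (Wq q₁ (wt g₁) * V₁) := by
  unfold lqqNorm Wq pairB
  rw [if_neg hq₁]
  by_cases ht : q₁ = ⊤
  · rw [if_pos ht, if_pos ht, if_pos ht, if_pos ht]
    have : Nonempty (Fin M') := ⟨g₀⟩
    have hm : 0 ≤ max (wt g₀ * V₀) (wt g₁ * V₁) :=
      le_max_of_le_left (mul_nonneg (hwt g₀).le hV₀)
    refine le_antisymm (ciSup_le fun g => ?_) (max_le ?_ ?_)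
    · rw [hbl g]
      rcases eq_or_ne g g₀ with rfl | h0
      · rw [if_pos rfl, if_neg hgg, add_zero]
        exact le_max_left _ _
      · rw [if_neg h0, zero_add]
        rcases eq_or_ne g g₁ with rfl | h1
        · rw [if_pos rfl]
          exact le_max_right _ _
        · rw [if_neg h1, mul_zero]
          exact hm
    · have := le_ciSup (f := fun g => wt g * blockLqNorm q₂ (Gt g) β)
        (Set.Finite.bddAbove (Set.finite_range _)) g₀
      rwa [hbl g₀, if_pos rfl, if_neg hgg, add_zero] at this
    · have := le_ciSup (f := fun g => wt g * blockLqNorm q₂ (Gt g) β)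
        (Set.Finite.bddAbove (Set.finite_range _)) g₁
      rwa [hbl g₁, if_pos rfl, if_neg hgg.symm, zero_add] at this
  · rw [if_neg ht, if_neg ht, if_neg ht, if_neg ht]
    have hr : q₁.toReal ≠ 0 := ne_of_gt (toReal_pos hq₁ ht)
    have h1 : ∀ g, wt g * (blockLqNorm q₂ (Gt g) β) ^ q₁.toReal
        = (if g = g₀ then wt g₀ * V₀ ^ q₁.toReal else 0)
          + (if g = g₁ then wt g₁ * V₁ ^ q₁.toReal else 0) := by
      intro g
      rw [hbl g]
      rcases eq_or_ne g g₀ with rfl | h0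
      · rw [if_pos rfl, if_pos rfl, if_neg hgg, if_neg hgg, add_zero, add_zero]
      · rw [if_neg h0, if_neg h0, zero_add, zero_add]
        rcases eq_or_ne g g₁ with rfl | h1
        · rw [if_pos rfl, if_pos rfl]
        · rw [if_neg h1, if_neg h1, Real.zero_rpow hr, mul_zero]
    rw [Finset.sum_congr rfl (fun g _ => h1 g), Finset.sum_add_distrib,
      Finset.sum_ite_eq' univ g₀, Finset.sum_ite_eq' univ g₁,
      if_pos (Finset.mem_univ _), if_pos (Finset.mem_univ _)]
    have key : ∀ u V : ℝ, 0 < u → 0 ≤ V →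
        (u ^ (1/q₁.toReal) * V) ^ q₁.toReal = u * V ^ q₁.toReal := by
      intro u V hu hV2
      rw [Real.mul_rpow (by positivity) hV2, ← Real.rpow_mul hu.le, one_div,
        inv_mul_cancel₀ hr, Real.rpow_one]
    rw [key _ _ (hwt g₀) hV₀, key _ _ (hwt g₁) hV₁]

lemma aux_rpow_le {u z r : ℝ} (hu : 0 < u) (hz : 0 ≤ z) (hr : 1 ≤ r) :
    (u ^ r + z) ^ (1/r) ≤ u + z / u ^ (r - 1) := by
  have hr0 : r ≠ 0 := by linarith
  have hur : (0:ℝ) < u ^ r := Real.rpow_pos_of_pos hu r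
  have h1 : u ^ r + z = u ^ r * (1 + z / u ^ r) := by field_simp
  have h2 : (u ^ r * (1 + z / u ^ r)) ^ (1/r) = u * (1 + z / u ^ r) ^ (1/r) := by
    rw [Real.mul_rpow hur.le (by positivity), one_div, Real.rpow_rpow_inv hu.le hr0]
  have h3 : (1 + z / u ^ r) ^ (1/r) ≤ 1 + z / u ^ r := by
    calc (1 + z / u ^ r) ^ (1/r) ≤ (1 + z / u ^ r) ^ (1:ℝ) :=
          Real.rpow_le_rpow_of_exponent_le (le_add_of_nonneg_right (div_nonneg hz hur.le))
            (by rw [div_le_one (by linarith)]; linarith)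
      _ = 1 + z / u ^ r := Real.rpow_one _
  have hsplit : u ^ r = u ^ (r - 1) * u := by
    have := Real.rpow_add_one hu.ne' (r - 1)
    rw [sub_add_cancel] at this
    exact this
  have h5 : (0:ℝ) < u ^ (r-1) := Real.rpow_pos_of_pos hu _
  have h4 : u * (1 + z / u ^ r) = u + z / u ^ (r - 1) := by
    rw [hsplit]
    field_simp
  calc (u ^ r + z) ^ (1/r) = (u ^ r * (1 + z / u ^ r)) ^ (1/r) := by rw [← h1]
    _ ≤ u * (1 + z / u ^ r) := by
        rw [h2]
        exact mul_le_mul_of_nonneg_left h3 hu.le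
    _ = u + z / u ^ (r - 1) := h4

lemma eps_choice {δ K r : ℝ} (hδ : 0 < δ) (hK : 0 < K) (hr : 1 < r) :
    ∃ ε : ℝ, 0 < ε ∧ ε ≤ 1 ∧ K * ε ^ (r - 1) < δ := by
  have hr1 : (0:ℝ) < r - 1 := by linarith
  set t := min 1 (δ / (2 * K)) with ht
  have ht0 : 0 < t := lt_min one_pos (by positivity)
  refine ⟨t ^ (r - 1)⁻¹, Real.rpow_pos_of_pos ht0 _, ?_, ?_⟩
  · exact Real.rpow_le_one ht0.le (min_le_left _ _) (inv_nonneg.mpr hr1.le)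
  · rw [Real.rpow_inv_rpow ht0.le (ne_of_gt hr1)]
    have : K * t ≤ K * (δ / (2 * K)) := by
      exact mul_le_mul_of_nonneg_left (min_le_right _ _) hK.le
    calc K * t ≤ K * (δ / (2 * K)) := this
      _ = δ / 2 := by field_simp
      _ < δ := by linarith

lemma partSum {p N : ℕ} (F : Fin N → Finset (Fin p))
    (hdis : ∀ a b, a ≠ b → Disjoint (F a) (F b)) (hcov : ∀ j, ∃ a, j ∈ F a)
    (h : Fin p → ℝ) : ∑ a, ∑ i ∈ F a, h i = ∑ i, h i := by
  have hb : Finset.univ.biUnion F = Finset.univ := by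
    ext j
    simp only [Finset.mem_biUnion, Finset.mem_univ, true_and, iff_true]
    exact hcov j
  rw [← Finset.sum_biUnion, hb]
  intro a _ b _ hab
  exact hdis a b hab

/-! ### total weight at a coordinate, shared weight of a pair -/

noncomputable def cw {p m : ℕ} (G : Fin m → Finset (Fin p)) (w : Fin m → ℝ) (j : Fin p) : ℝ :=
  ∑ g ∈ univ.filter (fun g => j ∈ G g), w g

noncomputable def Ajk {p m : ℕ} (G : Fin m → Finset (Fin p)) (w : Fin m → ℝ) (j k : Fin p) : ℝ :=
  ∑ g ∈ univ.filter (fun g => j ∈ G g ∧ k ∈ G g), w g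

lemma cw_pos {p m : ℕ} {G : Fin m → Finset (Fin p)} {w : Fin m → ℝ}
    (hw : ∀ g, 0 < w g) (hcover : ∀ j : Fin p, ∃ g, j ∈ G g) (j : Fin p) :
    0 < cw G w j := by
  obtain ⟨g₀, hg₀⟩ := hcover j
  exact Finset.sum_pos (fun g _ => hw g) ⟨g₀, Finset.mem_filter.mpr ⟨Finset.mem_univ _, hg₀⟩⟩

lemma cw_congr {p m : ℕ} (G : Fin m → Finset (Fin p)) (w : Fin m → ℝ) {j k : Fin p}
    (hsame : ∀ g, j ∈ G g ↔ k ∈ G g) : cw G w j = cw G w k := by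
  unfold cw
  congr 1
  ext g
  simp [hsame g]

lemma Ajk_comm {p m : ℕ} (G : Fin m → Finset (Fin p)) (w : Fin m → ℝ) (j k : Fin p) :
    Ajk G w j k = Ajk G w k j := by
  unfold Ajk
  congr 1
  ext g
  simp [and_comm]

lemma Ajk_le {p m : ℕ} {G : Fin m → Finset (Fin p)} {w : Fin m → ℝ}
    (hw : ∀ g, 0 < w g) (j k : Fin p) : Ajk G w j k ≤ cw G w j := by
  refine Finset.sum_le_sum_of_subset_of_nonneg ?_ (fun g _ _ => (hw g).le)
  intro g hg
  rw [Finset.mem_filter] at hg ⊢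
  exact ⟨hg.1, hg.2.1⟩

lemma Ajk_lt {p m : ℕ} {G : Fin m → Finset (Fin p)} {w : Fin m → ℝ}
    (hw : ∀ g, 0 < w g) {j k : Fin p} (hdiff : ¬ ∀ g, j ∈ G g ↔ k ∈ G g) :
    Ajk G w j k < cw G w j ∨ Ajk G w j k < cw G w k := by
  push_neg at hdiff
  obtain ⟨g₀, hg₀⟩ := hdiff
  have key : ∀ (j' k' : Fin p), j' ∈ G g₀ → k' ∉ G g₀ → Ajk G w j' k' < cw G w j' := by
    intro j' k' hj' hk'
    have hsub : univ.filter (fun g => j' ∈ G g ∧ k' ∈ G g)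
        ⊆ (univ.filter (fun g => j' ∈ G g)).erase g₀ := by
      intro g hg
      rw [Finset.mem_filter] at hg
      rw [Finset.mem_erase, Finset.mem_filter]
      exact ⟨fun h => hk' (h ▸ hg.2.2), hg.1, hg.2.1⟩
    have h1 : Ajk G w j' k' ≤ ∑ g ∈ (univ.filter (fun g => j' ∈ G g)).erase g₀, w g :=
      Finset.sum_le_sum_of_subset_of_nonneg hsub (fun g _ _ => (hw g).le)
    have h2 : ∑ g ∈ (univ.filter (fun g => j' ∈ G g)).erase g₀, w g < cw G w j' := by
      unfold cw
      have hg₀mem : g₀ ∈ univ.filter (fun g => j' ∈ G g) :=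
        Finset.mem_filter.mpr ⟨Finset.mem_univ _, hj'⟩
      rw [← Finset.add_sum_erase _ w hg₀mem]
      linarith [hw g₀]
    exact lt_of_le_of_lt h1 h2
  rcases hg₀ with h | h
  · left
    exact key j k h.1 h.2
  · right
    rw [Ajk_comm]
    exact key k j h.2 h.1


/-! ### gl and psi evaluations -/

lemma gl_sv {p m : ℕ} (G : Fin m → Finset (Fin p)) (w : Fin m → ℝ) (j : Fin p)
    {x : ℝ} (hx : 0 ≤ x) : glNorm G w (sv j x) = cw G w j * x := by
  unfold glNorm cw
  have h1 : ∀ g ∈ (univ : Finset (Fin m)), w g * subNorm (G g) (sv j x)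
      = if j ∈ G g then w g * x else 0 := by
    intro g _
    rw [subNorm_sv]
    split_ifs
    · rw [abs_of_nonneg hx]
    · rw [mul_zero]
  rw [Finset.sum_congr rfl h1, Finset.sum_filter, Finset.sum_mul]
  exact Finset.sum_congr rfl fun g _ => by split_ifs <;> ring

lemma gl_pv_sameA {p m : ℕ} (G : Fin m → Finset (Fin p)) (w : Fin m → ℝ) {j k : Fin p}
    (hjk : j ≠ k) (hsame : ∀ g, j ∈ G g ↔ k ∈ G g) (x y : ℝ) :
    glNorm G w (pv j k x y) = cw G w j * Real.sqrt (x ^ 2 + y ^ 2) := by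
  unfold glNorm cw
  have h1 : ∀ g ∈ (univ : Finset (Fin m)), w g * subNorm (G g) (pv j k x y)
      = if j ∈ G g then w g * Real.sqrt (x ^ 2 + y ^ 2) else 0 := by
    intro g _
    rw [subNorm_pv _ hjk]
    by_cases h : j ∈ G g
    · rw [if_pos h, if_pos h, if_pos ((hsame g).mp h)]
    · rw [if_neg h, if_neg h, if_neg (fun hk => h ((hsame g).mpr hk))]
      simp
  rw [Finset.sum_congr rfl h1, Finset.sum_filter, Finset.sum_mul]
  exact Finset.sum_congr rfl fun g _ => by split_ifs <;> ring

lemma gl_pv_lb {p m : ℕ} {G : Fin m → Finset (Fin p)} {w : Fin m → ℝ}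
    (hw : ∀ g, 0 < w g) {j k : Fin p} (hjk : j ≠ k) {x y : ℝ} (hx : 0 ≤ x) (hy : 0 ≤ y) :
    cw G w j * x + (cw G w k - Ajk G w j k) * y ≤ glNorm G w (pv j k x y) := by
  unfold glNorm
  have key : ∀ g ∈ (univ : Finset (Fin m)),
      (if j ∈ G g then w g * x else 0) + (if k ∈ G g ∧ j ∉ G g then w g * y else 0)
        ≤ w g * subNorm (G g) (pv j k x y) := by
    intro g _
    rw [subNorm_pv _ hjk]
    by_cases hj : j ∈ G g
    · rw [if_pos hj, if_pos hj, if_neg (fun h => h.2 hj), add_zero]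
      refine mul_le_mul_of_nonneg_left ?_ (hw g).le
      calc x = Real.sqrt (x ^ 2) := (Real.sqrt_sq hx).symm
        _ ≤ _ := Real.sqrt_le_sqrt (by split_ifs <;> nlinarith)
    · rw [if_neg hj, if_neg hj, zero_add]
      by_cases hk : k ∈ G g
      · rw [if_pos ⟨hk, hj⟩, if_pos hk]
        refine mul_le_mul_of_nonneg_left ?_ (hw g).le
        calc y = Real.sqrt (y ^ 2) := (Real.sqrt_sq hy).symm
          _ ≤ _ := Real.sqrt_le_sqrt (by nlinarith)
      · rw [if_neg (fun h => hk h.1)]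
        exact mul_nonneg (hw g).le (Real.sqrt_nonneg _)
  calc cw G w j * x + (cw G w k - Ajk G w j k) * y
      = ∑ g, ((if j ∈ G g then w g * x else 0) + (if k ∈ G g ∧ j ∉ G g then w g * y else 0)) := by
        rw [Finset.sum_add_distrib]
        have e1 : cw G w j * x = ∑ g, (if j ∈ G g then w g * x else 0) := by
          unfold cw
          rw [Finset.sum_mul, Finset.sum_filter]
        have e2 : (cw G w k - Ajk G w j k) * y
            = ∑ g, (if k ∈ G g ∧ j ∉ G g then w g * y else 0) := by
          have hsplit : cw G w k = Ajk G w j k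
              + ∑ g ∈ univ.filter (fun g => k ∈ G g ∧ j ∉ G g), w g := by
            unfold cw Ajk
            rw [← Finset.sum_filter_add_sum_filter_not (univ.filter (fun g => k ∈ G g))
              (fun g => j ∈ G g) w]
            congr 1
            · rw [Finset.filter_filter]
              congr 1
              ext g
              simp [and_comm]
            · rw [Finset.filter_filter]
          rw [hsplit]
          ring_nf
          rw [Finset.sum_mul, Finset.sum_filter]
          refine Finset.sum_congr rfl fun g _ => ?_
          split_ifs <;> ring
        rw [e1, e2]
    _ ≤ _ := Finset.sum_le_sum key


lemma mem_unique {p N : ℕ} {F : Fin N → Finset (Fin p)}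
    (hdis : ∀ a b, a ≠ b → Disjoint (F a) (F b)) {j : Fin p} {a b : Fin N}
    (hja : j ∈ F a) (hjb : j ∈ F b) : a = b := by
  by_contra h
  exact (Finset.disjoint_left.mp (hdis a b h) hja) hjb

lemma inducedWeight_eq {p m M : ℕ} {G : Fin m → Finset (Fin p)} (w : Fin m → ℝ)
    {Gi : Fin M → Finset (Fin p)} (hGi : IsInducedPartition G Gi) {j : Fin p} {a : Fin M}
    (hja : j ∈ Gi a) : inducedWeight G w Gi a = cw G w j := by
  unfold inducedWeight cw
  congr 1
  ext g
  simp only [Finset.mem_filter, Finset.mem_univ, true_and]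
  constructor
  · intro hsub
    exact hsub hja
  · intro hjg i hi
    have hsame : ∀ g', j ∈ G g' ↔ i ∈ G g' := (hGi.2.2.2 j i).mp ⟨a, hja, hi⟩
    exact (hsame g).mp hjg

lemma psi_sv {p m M : ℕ} {G : Fin m → Finset (Fin p)} (w : Fin m → ℝ)
    {Gi : Fin M → Finset (Fin p)} (hGi : IsInducedPartition G Gi) (j : Fin p)
    {x : ℝ} (hx : 0 ≤ x) : psiNorm G w Gi (sv j x) = cw G w j * x := by
  obtain ⟨a₀, ha₀⟩ := hGi.2.2.1 j
  unfold psiNorm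
  have h1 : ∀ a ∈ (univ : Finset (Fin M)), inducedWeight G w Gi a * subNorm (Gi a) (sv j x)
      = if a = a₀ then cw G w j * x else 0 := by
    intro a _
    rw [subNorm_sv]
    by_cases h : j ∈ Gi a
    · have e : a = a₀ := mem_unique hGi.2.1 h ha₀
      rw [if_pos h, if_pos e, abs_of_nonneg hx, inducedWeight_eq w hGi h]
    · have e : a ≠ a₀ := fun e => h (e ▸ ha₀)
      rw [if_neg h, if_neg e, mul_zero]
  rw [Finset.sum_congr rfl h1, Finset.sum_ite_eq' univ a₀, if_pos (Finset.mem_univ _)]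

lemma psi_pv_sameA {p m M : ℕ} {G : Fin m → Finset (Fin p)} (w : Fin m → ℝ)
    {Gi : Fin M → Finset (Fin p)} (hGi : IsInducedPartition G Gi) {j k : Fin p}
    (hjk : j ≠ k) (hsame : ∀ g, j ∈ G g ↔ k ∈ G g) (x y : ℝ) :
    psiNorm G w Gi (pv j k x y) = cw G w j * Real.sqrt (x ^ 2 + y ^ 2) := by
  obtain ⟨a₀, hja₀, hka₀⟩ := (hGi.2.2.2 j k).mpr hsame
  unfold psiNorm
  have h1 : ∀ a ∈ (univ : Finset (Fin M)), inducedWeight G w Gi a * subNorm (Gi a) (pv j k x y)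
      = if a = a₀ then cw G w j * Real.sqrt (x ^ 2 + y ^ 2) else 0 := by
    intro a _
    rw [subNorm_pv _ hjk]
    by_cases h : a = a₀
    · subst h
      rw [if_pos hja₀, if_pos hka₀, if_pos rfl, inducedWeight_eq w hGi hja₀]
    · have hj : j ∉ Gi a := fun hj => h (mem_unique hGi.2.1 hj hja₀)
      have hk : k ∉ Gi a := fun hk => h (mem_unique hGi.2.1 hk hka₀)
      rw [if_neg hj, if_neg hk, if_neg h]
      simp
  rw [Finset.sum_congr rfl h1, Finset.sum_ite_eq' univ a₀, if_pos (Finset.mem_univ _)]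

lemma psi_pv_diff {p m M : ℕ} {G : Fin m → Finset (Fin p)} (w : Fin m → ℝ)
    {Gi : Fin M → Finset (Fin p)} (hGi : IsInducedPartition G Gi) {j k : Fin p}
    (hjk : j ≠ k) (hdiff : ¬ ∀ g, j ∈ G g ↔ k ∈ G g) {x y : ℝ} (hx : 0 ≤ x) (hy : 0 ≤ y) :
    psiNorm G w Gi (pv j k x y) = cw G w j * x + cw G w k * y := by
  obtain ⟨a₀, ha₀⟩ := hGi.2.2.1 j
  obtain ⟨a₁, ha₁⟩ := hGi.2.2.1 k
  have haa : a₀ ≠ a₁ := by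
    intro e
    exact hdiff ((hGi.2.2.2 j k).mp ⟨a₀, ha₀, e ▸ ha₁⟩)
  unfold psiNorm
  have h1 : ∀ a ∈ (univ : Finset (Fin M)), inducedWeight G w Gi a * subNorm (Gi a) (pv j k x y)
      = (if a = a₀ then cw G w j * x else 0) + (if a = a₁ then cw G w k * y else 0) := by
    intro a _
    rw [subNorm_pv _ hjk]
    by_cases h0 : a = a₀
    · subst h0
      have hk : k ∉ Gi a := fun hk => hdiff ((hGi.2.2.2 j k).mp ⟨a, ha₀, hk⟩)
      rw [if_pos ha₀, if_neg hk, if_pos rfl, if_neg haa, add_zero, add_zero,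
        Real.sqrt_sq hx, inducedWeight_eq w hGi ha₀]
    · rw [if_neg (fun hj => h0 (mem_unique hGi.2.1 hj ha₀)), if_neg h0, zero_add, zero_add]
      by_cases h1 : a = a₁
      · subst h1
        rw [if_pos ha₁, if_pos rfl, Real.sqrt_sq hy, inducedWeight_eq w hGi ha₁]
      · rw [if_neg (fun hk => h1 (mem_unique hGi.2.1 hk ha₁)), if_neg h1]
        simp
  rw [Finset.sum_congr rfl h1, Finset.sum_add_distrib,
    Finset.sum_ite_eq' univ a₀, Finset.sum_ite_eq' univ a₁,
    if_pos (Finset.mem_univ _), if_pos (Finset.mem_univ _)]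


/-- `ψ^𝒢` is the tightest separable relaxation of `φ^G` among all
weighted `ℓ_{q₁}/ℓ_{q₂}` norms over partitions of `[p]` with positive weights:
no such norm can fit between `φ^G` and `ψ^𝒢` while being strictly below `ψ^𝒢`
somewhere. -/
theorem tightest_separable_relaxation {p m M : ℕ}
    (G : Fin m → Finset (Fin p)) (w : Fin m → ℝ)
    (hw : ∀ g, 0 < w g) (hcover : ∀ j : Fin p, ∃ g, j ∈ G g)
    (Gi : Fin M → Finset (Fin p)) (hGi : IsInducedPartition G Gi) :
    ¬ ∃ (M' : ℕ) (q₁ q₂ : ℝ≥0∞) (Gt : Fin M' → Finset (Fin p)) (wt : Fin M' → ℝ),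
      (∀ a, (Gt a).Nonempty) ∧
      (∀ a b : Fin M', a ≠ b → Disjoint (Gt a) (Gt b)) ∧
      (∀ j : Fin p, ∃ a, j ∈ Gt a) ∧
      (∀ a, 0 < wt a) ∧
      (∀ β : Fin p → ℝ,
        glNorm G w β ≤ lqqNorm q₁ q₂ Gt wt β ∧ lqqNorm q₁ q₂ Gt wt β ≤ psiNorm G w Gi β) ∧
      (∃ β : Fin p → ℝ, lqqNorm q₁ q₂ Gt wt β < psiNorm G w Gi β) := by
  rintro ⟨M', q₁, q₂, Gt, wt, hGtne, hGtdis, hGtcov, hwt, hsand, βs, hlt⟩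
  -- degenerate case p = 0
  rcases isEmpty_or_nonempty (Fin p) with hemp | hne
  · have hgl0 : glNorm G w βs = 0 := by
      unfold glNorm subNorm
      have : ∀ g, G g = ∅ := fun g => Finset.eq_empty_of_isEmpty _
      simp [this]
    have hps0 : psiNorm G w Gi βs = 0 := by
      unfold psiNorm subNorm
      have : ∀ a, Gi a = ∅ := fun a => Finset.eq_empty_of_isEmpty _
      simp [this]
    have h1 := (hsand βs).1
    rw [hgl0] at h1
    rw [hps0] at hlt
    linarith
  obtain ⟨j₀⟩ := hne
  have hc : ∀ j, 0 < cw G w j := cw_pos hw hcover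
  choose gj hgj using hGtcov
  choose aj haj using hGi.2.2.1
  have memGt : ∀ {j : Fin p} {g : Fin M'}, j ∈ Gt g → g = gj j :=
    fun hj => mem_unique hGtdis hj (hgj _)
  -- squeeze on single-coordinate vectors
  have hsv : ∀ (j : Fin p) (t : ℝ), 0 ≤ t → lqqNorm q₁ q₂ Gt wt (sv j t) = cw G w j * t := by
    intro j t ht
    have h1 := (hsand (sv j t)).1
    have h2 := (hsand (sv j t)).2
    rw [gl_sv G w j ht] at h1
    rw [psi_sv w hGi j ht] at h2
    linarith
  -- q₂ ≠ 0
  have hq2 : q₂ ≠ 0 := by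
    intro h
    subst h
    have hbl : ∀ g, blockLqNorm 0 (Gt g) (sv j₀ 1) = blockLqNorm 0 (Gt g) (sv j₀ 2) := by
      intro g
      unfold blockLqNorm
      rw [if_pos rfl, if_pos rfl]
      congr 2
      ext i
      unfold sv
      by_cases hi : i = j₀ <;> simp [hi]
    have ec := lqq_congr q₁ 0 Gt wt _ _ hbl
    rw [hsv j₀ 1 zero_le_one, hsv j₀ 2 (by norm_num)] at ec
    have := hc j₀
    linarith
  -- q₁ ≠ 0
  have hq1 : q₁ ≠ 0 := by
    intro h
    subst h
    have hval : ∀ t : ℝ, 0 < t → lqqNorm 0 q₂ Gt wt (sv j₀ t)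
        = ((univ.filter fun g => j₀ ∈ Gt g).card : ℝ) := by
      intro t ht
      unfold lqqNorm
      rw [if_pos rfl]
      congr 2
      apply Finset.filter_congr
      intro g _
      rw [blockLq_sv hq2 _ _ ht.le]
      simp only [ne_eq, mul_eq_zero, not_or]
      constructor
      · intro hcond
        by_contra hmem
        rw [if_neg hmem] at hcond
        exact hcond.2 rfl
      · intro hmem
        rw [if_pos hmem]
        exact ⟨(hwt g).ne', ht.ne'⟩
    have e1 := (hval 1 one_pos).symm.trans (hsv j₀ 1 zero_le_one)
    have e2 := (hval 2 two_pos).symm.trans (hsv j₀ 2 (by norm_num))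
    rw [e1] at e2
    have := hc j₀
    linarith
  -- block evaluation for single-coordinate vectors
  have hbl_sv : ∀ (j : Fin p) (t : ℝ), 0 ≤ t → ∀ g,
      blockLqNorm q₂ (Gt g) (sv j t) = if g = gj j then t else 0 := by
    intro j t ht g
    rw [blockLq_sv hq2 _ _ ht]
    by_cases hg : g = gj j
    · rw [if_pos (hg ▸ hgj j), if_pos hg]
    · rw [if_neg (fun hmem => hg (memGt hmem)), if_neg hg]
  -- key fact: effective weights equal cw
  have hkey : ∀ j : Fin p, Wq q₁ (wt (gj j)) = cw G w j := by
    intro j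
    have := lqq_single hq1 hwt (gj j) zero_le_one (hbl_sv j 1 zero_le_one)
    rw [hsv j 1 zero_le_one] at this
    rw [mul_one] at this
    linarith
  -- lqq on pair vectors, same block
  have hlqq_same : ∀ (j k : Fin p), j ≠ k → gj j = gj k → ∀ (x y : ℝ), 0 ≤ x → 0 ≤ y →
      lqqNorm q₁ q₂ Gt wt (pv j k x y) = cw G w j * pairB q₂ x y := by
    intro j k hjk hg x y hx hy
    have hbl : ∀ g, blockLqNorm q₂ (Gt g) (pv j k x y)
        = if g = gj j then pairB q₂ x y else 0 := by
      intro g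
      rw [blockLq_pv hq2 _ hjk hx hy]
      by_cases hgg : g = gj j
      · rw [if_pos (hgg ▸ hgj j), if_pos (by rw [hgg, hg]; exact hgj k), if_pos hgg]
      · rw [if_neg (fun hmem => hgg (memGt hmem)),
          if_neg (fun hmem => hgg ((memGt hmem).trans hg.symm)), if_neg hgg]
        exact pairB_x0' hq2 le_rfl
    rw [lqq_single hq1 hwt (gj j) (pairB_nonneg hx hy) hbl, hkey j]
  -- lqq on pair vectors, different blocks
  have hlqq_diff : ∀ (j k : Fin p), j ≠ k → gj j ≠ gj k → ∀ (x y : ℝ), 0 ≤ x → 0 ≤ y →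
      lqqNorm q₁ q₂ Gt wt (pv j k x y) = pairB q₁ (cw G w j * x) (cw G w k * y) := by
    intro j k hjk hg x y hx hy
    have hbl : ∀ g, blockLqNorm q₂ (Gt g) (pv j k x y)
        = (if g = gj j then x else 0) + (if g = gj k then y else 0) := by
      intro g
      rw [blockLq_pv hq2 _ hjk hx hy]
      by_cases hg0 : g = gj j
      · rw [if_pos (hg0 ▸ hgj j), if_neg (fun hmem => hg (hg0.symm.trans (memGt hmem))),
          if_pos hg0, if_neg (fun e => hg (hg0.symm.trans e))]
        rw [add_zero]
        exact pairB_x0' hq2 hx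
      · rw [if_neg (fun hmem => hg0 (memGt hmem)), if_neg hg0, zero_add]
        by_cases hg1 : g = gj k
        · rw [if_pos (hg1 ▸ hgj k), if_pos hg1]
          exact pairB_0y hq2 hy
        · rw [if_neg (fun hmem => hg1 (memGt hmem)), if_neg hg1]
          exact pairB_x0' hq2 le_rfl
    rw [lqq_double hq1 hwt hg hx hy hbl, hkey j, hkey k]
  -- Test P1 : pair in same induced block and same new block forces q₂ = ℓ²
  have hP1 : ∀ (j k : Fin p), j ≠ k → (∀ g, j ∈ G g ↔ k ∈ G g) → gj j = gj k →
      q₂ ≠ ⊤ ∧ q₂.toReal = 2 := by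
    intro j k hjk hsame hg
    have hgl := (hsand (pv j k 1 1)).1
    have hps := (hsand (pv j k 1 1)).2
    rw [gl_pv_sameA G w hjk hsame 1 1] at hgl
    rw [psi_pv_sameA w hGi hjk hsame 1 1] at hps
    rw [hlqq_same j k hjk hg 1 1 zero_le_one zero_le_one] at hgl hps
    have hpair : pairB q₂ 1 1 = Real.sqrt 2 := by
      have := mul_left_cancel₀ (hc j).ne' (le_antisymm hps hgl)
      rw [this]
      norm_num
    have hs2 : Real.sqrt 2 = (2:ℝ) ^ (1/(2:ℝ)) := Real.sqrt_eq_rpow 2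
    by_cases ht : q₂ = ⊤
    · exfalso
      unfold pairB at hpair
      rw [if_pos ht, max_self] at hpair
      have h2 : (Real.sqrt 2) ^ 2 = 2 := Real.sq_sqrt (by norm_num)
      rw [← hpair] at h2
      norm_num at h2
    · refine ⟨ht, ?_⟩
      have hs := toReal_pos hq2 ht
      unfold pairB at hpair
      rw [if_neg ht, Real.one_rpow] at hpair
      rw [hs2, show (1:ℝ) + 1 = 2 by norm_num] at hpair
      have hl := congrArg Real.log hpair
      rw [Real.log_rpow two_pos, Real.log_rpow two_pos] at hl
      have hlog : Real.log 2 ≠ 0 := ne_of_gt (Real.log_pos one_lt_two)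
      have : 1/q₂.toReal = 1/(2:ℝ) := mul_right_cancel₀ hlog hl
      field_simp at this
      linarith
  -- Test P2 : same induced block, different new blocks forces q₁ = ℓ²
  have hP2 : ∀ (j k : Fin p), j ≠ k → (∀ g, j ∈ G g ↔ k ∈ G g) → gj j ≠ gj k →
      q₁ ≠ ⊤ ∧ q₁.toReal = 2 := by
    intro j k hjk hsame hg
    have hgl := (hsand (pv j k 1 1)).1
    have hps := (hsand (pv j k 1 1)).2
    rw [gl_pv_sameA G w hjk hsame 1 1] at hgl
    rw [psi_pv_sameA w hGi hjk hsame 1 1] at hps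
    rw [hlqq_diff j k hjk hg 1 1 zero_le_one zero_le_one, mul_one, mul_one,
      ← cw_congr G w hsame] at hgl hps
    have hpair : pairB q₁ (cw G w j) (cw G w j) = cw G w j * Real.sqrt 2 := by
      have := le_antisymm hps hgl
      rw [this]
      norm_num
    have hs2 : Real.sqrt 2 = (2:ℝ) ^ (1/(2:ℝ)) := Real.sqrt_eq_rpow 2
    have hsq2 : (1:ℝ) < Real.sqrt 2 := by
      have h2 : (Real.sqrt 2) ^ 2 = 2 := Real.sq_sqrt (by norm_num)
      nlinarith [Real.sqrt_nonneg 2]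
    by_cases ht : q₁ = ⊤
    · exfalso
      unfold pairB at hpair
      rw [if_pos ht, max_self] at hpair
      nlinarith [hc j]
    · refine ⟨ht, ?_⟩
      have hs := toReal_pos hq1 ht
      unfold pairB at hpair
      rw [if_neg ht] at hpair
      have hcp := hc j
      have hexp : (cw G w j ^ q₁.toReal + cw G w j ^ q₁.toReal) ^ (1/q₁.toReal)
          = 2 ^ (1/q₁.toReal) * cw G w j := by
        rw [show cw G w j ^ q₁.toReal + cw G w j ^ q₁.toReal
            = 2 * cw G w j ^ q₁.toReal by ring,
          Real.mul_rpow (by norm_num) (Real.rpow_nonneg hcp.le _), one_div,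
          Real.rpow_rpow_inv hcp.le (ne_of_gt hs)]
      rw [hexp, mul_comm (cw G w j) (Real.sqrt 2)] at hpair
      have h2r : (2:ℝ) ^ (1/q₁.toReal) = 2 ^ (1/(2:ℝ)) := by
        rw [← hs2]
        exact mul_right_cancel₀ hcp.ne' hpair
      have hl := congrArg Real.log h2r
      rw [Real.log_rpow two_pos, Real.log_rpow two_pos] at hl
      have hlog : Real.log 2 ≠ 0 := ne_of_gt (Real.log_pos one_lt_two)
      have : 1/q₁.toReal = 1/(2:ℝ) := mul_right_cancel₀ hlog hl
      field_simp at this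
      linarith
  -- symmetric lower bound for gl on pairs
  have hgl_lb' : ∀ (j k : Fin p), j ≠ k → ∀ (x y : ℝ), 0 ≤ x → 0 ≤ y →
      (cw G w j - Ajk G w j k) * x + cw G w k * y ≤ glNorm G w (pv j k x y) := by
    intro j k hjk x y hx hy
    rw [pv_comm j k hjk x y]
    have := gl_pv_lb (G := G) hw hjk.symm hy hx
    rw [Ajk_comm G w k j] at this
    linarith
  -- Test P3 : different induced blocks, same new block forces q₂ = ℓ¹
  have hP3 : ∀ (j k : Fin p), j ≠ k → ¬(∀ g, j ∈ G g ↔ k ∈ G g) → gj j = gj k →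
      q₂ ≠ ⊤ ∧ q₂.toReal = 1 := by
    intro j k hjk hdiff hg
    have hck : cw G w k = cw G w j := by
      rw [← hkey j, ← hkey k, hg]
    have hA : Ajk G w j k < cw G w j := by
      rcases Ajk_lt hw hdiff with h | h
      · exact h
      · rwa [hck] at h
    set c := cw G w j with hcdef
    have hcp : 0 < c := hc j
    by_cases ht : q₂ = ⊤
    · exfalso
      have hgl := (hsand (pv j k 1 1)).1
      have h1 := gl_pv_lb (G := G) hw hjk (zero_le_one) (zero_le_one)
      rw [hlqq_same j k hjk hg 1 1 zero_le_one zero_le_one] at hgl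
      unfold pairB at hgl
      rw [if_pos ht, max_self, mul_one] at hgl
      rw [hck] at h1
      nlinarith
    refine ⟨ht, ?_⟩
    have hs := toReal_pos hq2 ht
    -- upper bound: s ≥ 1
    have hup : 1 ≤ q₂.toReal := by
      have hps := (hsand (pv j k 1 1)).2
      rw [hlqq_same j k hjk hg 1 1 zero_le_one zero_le_one,
        psi_pv_diff w hGi hjk hdiff zero_le_one zero_le_one, mul_one, mul_one, hck] at hps
      unfold pairB at hps
      rw [if_neg ht, Real.one_rpow] at hps
      have h2 : (2:ℝ) ^ (1/q₂.toReal) ≤ 2 := by nlinarith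
      have h2' : (2:ℝ) ^ (1/q₂.toReal) ≤ 2 ^ (1:ℝ) := by rwa [Real.rpow_one]
      have := (Real.rpow_le_rpow_left_iff one_lt_two).mp h2'
      rw [div_le_one hs] at this
      exact this
    -- no strict: s ≤ 1
    by_contra hne
    have hs1 : 1 < q₂.toReal := lt_of_le_of_ne hup (fun e => hne e.symm)
    obtain ⟨ε, hε0, hε1, hεlt⟩ := eps_choice (sub_pos.mpr hA) hcp hs1
    have hgl := (hsand (pv j k 1 ε)).1
    have h1 := gl_pv_lb (G := G) hw hjk (zero_le_one) hε0.le
    rw [hlqq_same j k hjk hg 1 ε zero_le_one hε0.le] at hgl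
    rw [hck] at h1
    unfold pairB at hgl
    rw [if_neg ht, Real.one_rpow] at hgl
    have hb : ((1:ℝ) + ε ^ q₂.toReal) ^ (1/q₂.toReal) ≤ 1 + ε ^ q₂.toReal := by
      have := aux_rpow_le one_pos (Real.rpow_nonneg hε0.le q₂.toReal) hup
      rwa [Real.one_rpow, Real.one_rpow, div_one] at this
    have heps : ε ^ q₂.toReal = ε ^ (q₂.toReal - 1) * ε := by
      have := Real.rpow_add_one hε0.ne' (q₂.toReal - 1)
      rw [sub_add_cancel] at this
      rw [this]
    have hfin : c * (1 + ε ^ q₂.toReal) < c + (c - Ajk G w j k) * ε := by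
      rw [heps, mul_add, mul_one]
      have : c * (ε ^ (q₂.toReal - 1) * ε) = (c * ε ^ (q₂.toReal - 1)) * ε := by ring
      rw [this]
      have := mul_lt_mul_of_pos_right hεlt hε0
      linarith
    have hc2 : c * ((1 + ε ^ q₂.toReal) ^ (1/q₂.toReal)) ≤ c * (1 + ε ^ q₂.toReal) :=
      mul_le_mul_of_nonneg_left hb hcp.le
    nlinarith
  -- Test P4 : different induced blocks, different new blocks forces q₁ = ℓ¹
  have hP4 : ∀ (j k : Fin p), j ≠ k → ¬(∀ g, j ∈ G g ↔ k ∈ G g) → gj j ≠ gj k →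
      q₁ ≠ ⊤ ∧ q₁.toReal = 1 := by
    intro j k hjk hdiff hg
    have hcj : 0 < cw G w j := hc j
    have hck : 0 < cw G w k := hc k
    by_cases ht : q₁ = ⊤
    · exfalso
      rcases Ajk_lt hw hdiff with hA | hA
      · -- A < cw j : test (ε, 1)
        set ε := min 1 (cw G w k / cw G w j) with hεdef
        have hε0 : 0 < ε := lt_min one_pos (by positivity)
        have hgl := (hsand (pv j k ε 1)).1
        have h1 := hgl_lb' j k hjk ε 1 hε0.le zero_le_one
        rw [hlqq_diff j k hjk hg ε 1 hε0.le zero_le_one, mul_one] at hgl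
        unfold pairB at hgl
        rw [if_pos ht] at hgl
        have hmax : max (cw G w j * ε) (cw G w k) = cw G w k := by
          apply max_eq_right
          rw [← le_div_iff₀' hcj]
          exact min_le_right _ _
        rw [hmax] at hgl
        nlinarith
      · -- A < cw k : test (1, ε)
        set ε := min 1 (cw G w j / cw G w k) with hεdef
        have hε0 : 0 < ε := lt_min one_pos (by positivity)
        have hgl := (hsand (pv j k 1 ε)).1
        have h1 := gl_pv_lb (G := G) hw hjk zero_le_one hε0.le
        rw [hlqq_diff j k hjk hg 1 ε zero_le_one hε0.le, mul_one] at hgl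
        unfold pairB at hgl
        rw [if_pos ht] at hgl
        have hmax : max (cw G w j) (cw G w k * ε) = cw G w j := by
          apply max_eq_left
          rw [← le_div_iff₀' hck]
          exact min_le_right _ _
        rw [hmax] at hgl
        nlinarith
    refine ⟨ht, ?_⟩
    have hr := toReal_pos hq1 ht
    -- upper bound: r ≥ 1
    have hup : 1 ≤ q₁.toReal := by
      have hps := (hsand (pv j k (1/cw G w j) (1/cw G w k))).2
      rw [hlqq_diff j k hjk hg _ _ (by positivity) (by positivity),
        psi_pv_diff w hGi hjk hdiff (by positivity) (by positivity),
        mul_one_div_cancel hcj.ne', mul_one_div_cancel hck.ne'] at hps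
      unfold pairB at hps
      rw [if_neg ht, Real.one_rpow] at hps
      have h2' : (2:ℝ) ^ (1/q₁.toReal) ≤ 2 ^ (1:ℝ) := by
        rw [Real.rpow_one]
        nlinarith
      have := (Real.rpow_le_rpow_left_iff one_lt_two).mp h2'
      rw [div_le_one hr] at this
      exact this
    by_contra hne
    have hr1 : 1 < q₁.toReal := lt_of_le_of_ne hup (fun e => hne e.symm)
    set r := q₁.toReal with hrdef
    rcases Ajk_lt hw hdiff with hA | hA
    · -- A < cw j : test (ε, 1)
      obtain ⟨ε, hε0, hε1, hεlt⟩ := eps_choice (sub_pos.mpr hA)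
        (show 0 < cw G w j ^ r / cw G w k ^ (r-1) by positivity) hr1
      have hgl := (hsand (pv j k ε 1)).1
      have h1 := hgl_lb' j k hjk ε 1 hε0.le zero_le_one
      rw [hlqq_diff j k hjk hg ε 1 hε0.le zero_le_one, mul_one] at hgl
      unfold pairB at hgl
      rw [if_neg ht] at hgl
      have hb : ((cw G w j * ε) ^ r + cw G w k ^ r) ^ (1/r)
          ≤ cw G w k + (cw G w j ^ r / cw G w k ^ (r-1)) * ε ^ r := by
        have h2 := aux_rpow_le hck (Real.rpow_nonneg (by positivity) r
          : (0:ℝ) ≤ (cw G w j * ε) ^ r) hup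
        rw [add_comm ((cw G w j * ε) ^ r) (cw G w k ^ r)]
        calc (cw G w k ^ r + (cw G w j * ε) ^ r) ^ (1/r)
            ≤ cw G w k + (cw G w j * ε) ^ r / cw G w k ^ (r-1) := h2
          _ = cw G w k + (cw G w j ^ r / cw G w k ^ (r-1)) * ε ^ r := by
              rw [Real.mul_rpow hcj.le hε0.le]
              ring
      have heps : ε ^ r = ε ^ (r - 1) * ε := by
        have := Real.rpow_add_one hε0.ne' (r - 1)
        rw [sub_add_cancel] at this
        rw [this]
      have hfin : cw G w k + (cw G w j ^ r / cw G w k ^ (r-1)) * ε ^ r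
          < cw G w k + (cw G w j - Ajk G w j k) * ε := by
        rw [heps]
        have hmm : (cw G w j ^ r / cw G w k ^ (r-1)) * (ε ^ (r-1) * ε)
            = ((cw G w j ^ r / cw G w k ^ (r-1)) * ε ^ (r-1)) * ε := by ring
        rw [hmm]
        have := mul_lt_mul_of_pos_right hεlt hε0
        linarith
      nlinarith
    · -- A < cw k : test (1, ε)
      obtain ⟨ε, hε0, hε1, hεlt⟩ := eps_choice (sub_pos.mpr hA)
        (show 0 < cw G w k ^ r / cw G w j ^ (r-1) by positivity) hr1
      have hgl := (hsand (pv j k 1 ε)).1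
      have h1 := gl_pv_lb (G := G) hw hjk zero_le_one hε0.le
      rw [hlqq_diff j k hjk hg 1 ε zero_le_one hε0.le, mul_one] at hgl
      unfold pairB at hgl
      rw [if_neg ht] at hgl
      have hb : (cw G w j ^ r + (cw G w k * ε) ^ r) ^ (1/r)
          ≤ cw G w j + (cw G w k ^ r / cw G w j ^ (r-1)) * ε ^ r := by
        have h2 := aux_rpow_le hcj (Real.rpow_nonneg (by positivity) r
          : (0:ℝ) ≤ (cw G w k * ε) ^ r) hup
        calc (cw G w j ^ r + (cw G w k * ε) ^ r) ^ (1/r)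
            ≤ cw G w j + (cw G w k * ε) ^ r / cw G w j ^ (r-1) := h2
          _ = cw G w j + (cw G w k ^ r / cw G w j ^ (r-1)) * ε ^ r := by
              rw [Real.mul_rpow hck.le hε0.le]
              ring
      have heps : ε ^ r = ε ^ (r - 1) * ε := by
        have := Real.rpow_add_one hε0.ne' (r - 1)
        rw [sub_add_cancel] at this
        rw [this]
      have hfin : cw G w j + (cw G w k ^ r / cw G w j ^ (r-1)) * ε ^ r
          < cw G w j + (cw G w k - Ajk G w j k) * ε := by
        rw [heps]
        have hmm : (cw G w k ^ r / cw G w j ^ (r-1)) * (ε ^ (r-1) * ε)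
            = ((cw G w k ^ r / cw G w j ^ (r-1)) * ε ^ (r-1)) * ε := by ring
        rw [hmm]
        have := mul_lt_mul_of_pos_right hεlt hε0
        linarith
      nlinarith
  -- ASSEMBLY
  have nconv : ∀ {j k : Fin p}, (∃ g, j ∈ G g ∧ k ∉ G g ∨ j ∉ G g ∧ k ∈ G g) →
      ¬ ∀ g, j ∈ G g ↔ k ∈ G g := by
    rintro j k ⟨g, hg'⟩ hall
    rcases hg' with ⟨h1, h2⟩ | ⟨h1, h2⟩
    · exact h2 ((hall g).mp h1)
    · exact h1 ((hall g).mpr h2)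
  by_cases hcross : ∃ j k : Fin p, ¬ ∀ g, j ∈ G g ↔ k ∈ G g
  case neg =>
    -- all coordinates have identical group membership: gl = psi globally
    push_neg at hcross
    have hGg : ∀ g : Fin m, subNorm (G g) βs
        = if j₀ ∈ G g then subNorm univ βs else 0 := by
      intro g
      by_cases h : j₀ ∈ G g
      · rw [if_pos h]
        congr 1
        exact Finset.eq_univ_iff_forall.mpr fun k => (hcross j₀ k g).mp h
      · rw [if_neg h]
        have hemp : G g = ∅ := by
          apply Finset.eq_empty_iff_forall_notMem.mpr
          intro k hk
          exact h ((hcross j₀ k g).mpr hk)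
        rw [hemp]
        simp [subNorm]
    have hgl : glNorm G w βs = cw G w j₀ * subNorm univ βs := by
      unfold glNorm cw
      have h1 : ∀ g ∈ (univ : Finset (Fin m)), w g * subNorm (G g) βs
          = if j₀ ∈ G g then w g * subNorm univ βs else 0 := by
        intro g _
        rw [hGg g]
        split_ifs
        · rfl
        · rw [mul_zero]
      rw [Finset.sum_congr rfl h1, Finset.sum_filter, Finset.sum_mul]
      exact Finset.sum_congr rfl fun g _ => by split_ifs <;> ring
    have hallM : ∀ a : Fin M, a = aj j₀ := by
      intro a
      obtain ⟨k, hk⟩ := hGi.1 a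
      obtain ⟨b, hb1, hb2⟩ := (hGi.2.2.2 j₀ k).mpr (hcross j₀ k)
      have e1 : b = a := mem_unique hGi.2.1 hb2 hk
      have e2 : b = aj j₀ := mem_unique hGi.2.1 hb1 (haj j₀)
      rw [← e1, e2]
    have hGa : Gi (aj j₀) = univ := by
      apply Finset.eq_univ_iff_forall.mpr
      intro k
      obtain ⟨b, hb1, hb2⟩ := (hGi.2.2.2 j₀ k).mpr (hcross j₀ k)
      have e2 : b = aj j₀ := mem_unique hGi.2.1 hb1 (haj j₀)
      exact e2 ▸ hb2
    have hps : psiNorm G w Gi βs = cw G w j₀ * subNorm univ βs := by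
      unfold psiNorm
      rw [Finset.sum_eq_single (aj j₀) (fun b _ hb => absurd (hallM b) hb)
        (fun h => absurd (Finset.mem_univ _) h)]
      rw [hGa, inducedWeight_eq w hGi (haj j₀)]
    have h1 := (hsand βs).1
    rw [hgl] at h1
    rw [hps] at hlt
    linarith
  case pos =>
  obtain ⟨j₁, k₁, hd₁⟩ := hcross
  have hne₁ : j₁ ≠ k₁ := by rintro rfl; exact hd₁ fun g => Iff.rfl
  -- Step: no P2 pairs
  have hR : ∀ j k : Fin p, j ≠ k → (∀ g, j ∈ G g ↔ k ∈ G g) → gj j = gj k := by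
    by_contra hnR
    push_neg at hnR
    obtain ⟨j₂, k₂, hne₂, hsame₂, hgne₂⟩ := hnR
    have h2 := hP2 j₂ k₂ hne₂ hsame₂ hgne₂
    have hdi : ¬(∀ g, j₂ ∈ G g ↔ j₁ ∈ G g) ∨ ¬(∀ g, j₂ ∈ G g ↔ k₁ ∈ G g) := by
      by_contra hb
      push_neg at hb
      exact hd₁ fun g => ((hb.1 g).symm.trans (hb.2 g))
    have final : ∀ i : Fin p, ¬(∀ g, j₂ ∈ G g ↔ i ∈ G g) → False := by
      intro i hdi'
      have hne2i : j₂ ≠ i := by rintro rfl; exact hdi' fun g => Iff.rfl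
      by_cases hgi : gj j₂ = gj i
      · have hdk : ¬∀ g, k₂ ∈ G g ↔ i ∈ G g := by
          intro h
          exact hdi' fun g => (hsame₂ g).trans (h g)
        have hnek : k₂ ≠ i := by rintro rfl; exact hdk fun g => Iff.rfl
        have hgk : gj k₂ ≠ gj i := fun e => hgne₂ (hgi.trans e.symm)
        have h4 := hP4 k₂ i hnek hdk hgk
        rw [h4.2] at h2
        exact absurd h2.2 (by norm_num)
      · have h4 := hP4 j₂ i hne2i hdi' hgi
        rw [h4.2] at h2
        exact absurd h2.2 (by norm_num)
    rcases hdi with h | h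
    · exact final j₁ h
    · exact final k₁ h
  by_cases hR' : ∀ j k : Fin p, j ≠ k → gj j = gj k → (∀ g, j ∈ G g ↔ k ∈ G g)
  case pos =>
    -- the two partitions coincide
    have hgne₁ : gj j₁ ≠ gj k₁ := fun e => hd₁ (hR' j₁ k₁ hne₁ e)
    have h4 := hP4 j₁ k₁ hne₁ hd₁ hgne₁
    have hbs : ∀ (g : Fin M') (β : Fin p → ℝ),
        blockLqNorm q₂ (Gt g) β = subNorm (Gt g) β := by
      by_cases hSA : ∃ j k : Fin p, j ≠ k ∧ (∀ g, j ∈ G g ↔ k ∈ G g)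
      · obtain ⟨j₂, k₂, hne₂, hsame₂⟩ := hSA
        have h1 := hP1 j₂ k₂ hne₂ hsame₂ (hR j₂ k₂ hne₂ hsame₂)
        intro g β
        exact blockLq_two h1.1 h1.2 _ _
      · intro g β
        obtain ⟨i, hi⟩ := hGtne g
        have hsing : Gt g = {i} := by
          apply Finset.eq_singleton_iff_unique_mem.mpr
          refine ⟨hi, fun i' hi' => ?_⟩
          by_contra hne'
          exact hSA ⟨i', i, hne', hR' i' i hne' ((memGt hi').symm.trans (memGt hi))⟩
        rw [hsing, blockLq_singleton hq2, subNorm_singleton]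
    have hlqq_sum : ∀ β, lqqNorm q₁ q₂ Gt wt β = ∑ g, wt g * subNorm (Gt g) β := by
      intro β
      unfold lqqNorm
      rw [if_neg hq1, if_neg h4.1, h4.2]
      simp only [Real.rpow_one, hbs]
      rw [show (1:ℝ)/1 = 1 by norm_num, Real.rpow_one]
    have hWq : ∀ g : Fin M', Wq q₁ (wt g) = wt g := by
      intro g
      unfold Wq
      rw [if_neg h4.1, h4.2]
      norm_num
    choose elt helt using hGtne
    set σ : Fin M' → Fin M := fun g => aj (elt g) with hσ
    have hGtσ : ∀ g, Gt g = Gi (σ g) := by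
      intro g
      ext i
      constructor
      · intro hi
        rcases eq_or_ne i (elt g) with rfl | hne'
        · exact haj _
        · have he : gj i = gj (elt g) := (memGt hi).symm.trans (memGt (helt g))
          have hsame := hR' i (elt g) hne' he
          obtain ⟨b, hb1, hb2⟩ := (hGi.2.2.2 i (elt g)).mpr hsame
          have hbe : b = aj (elt g) := mem_unique hGi.2.1 hb2 (haj (elt g))
          have hσg : σ g = aj (elt g) := rfl
          rw [hσg, ← hbe]
          exact hb1
      · intro hi
        rcases eq_or_ne i (elt g) with rfl | hne'
        · exact helt g
        · have hsame : ∀ g', i ∈ G g' ↔ elt g ∈ G g' :=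
            (hGi.2.2.2 i (elt g)).mp ⟨σ g, hi, haj (elt g)⟩
          have he := hR i (elt g) hne' hsame
          have : g = gj (elt g) := memGt (helt g)
          rw [this, ← he]
          exact hgj i
    have hwtσ : ∀ g, wt g = inducedWeight G w Gi (σ g) := by
      intro g
      have h1 : g = gj (elt g) := memGt (helt g)
      calc wt g = Wq q₁ (wt g) := (hWq g).symm
        _ = Wq q₁ (wt (gj (elt g))) := by rw [← h1]
        _ = cw G w (elt g) := hkey (elt g)
        _ = inducedWeight G w Gi (σ g) := (inducedWeight_eq w hGi (haj (elt g))).symm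
    have hσbij : Function.Bijective σ := by
      constructor
      · intro g g' he
        have : Gt g = Gt g' := by rw [hGtσ g, hGtσ g', he]
        have := this ▸ helt g
        exact (memGt (helt g)).trans (memGt this).symm
      · intro a
        obtain ⟨i, hi⟩ := hGi.1 a
        refine ⟨gj i, ?_⟩
        have : i ∈ Gi (σ (gj i)) := (hGtσ (gj i)) ▸ (hgj i)
        exact mem_unique hGi.2.1 this hi
    have hfinal : ∀ β, lqqNorm q₁ q₂ Gt wt β = psiNorm G w Gi β := by
      intro β
      rw [hlqq_sum β]
      unfold psiNorm
      rw [← Function.Bijective.sum_comp hσbij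
        (fun a => inducedWeight G w Gi a * subNorm (Gi a) β)]
      refine Finset.sum_congr rfl fun g _ => ?_
      rw [← hwtσ g, ← hGtσ g]
    rw [hfinal βs] at hlt
    exact lt_irrefl _ hlt
  case neg =>
    push_neg at hR'
    obtain ⟨j₃, k₃, hne₃, hg₃, hd₃⟩ := hR'
    have hd₃' := nconv hd₃
    have h3 := hP3 j₃ k₃ hne₃ hd₃' hg₃
    have hnoSA : ∀ j k : Fin p, j ≠ k → ¬(∀ g, j ∈ G g ↔ k ∈ G g) := by
      intro j k hne hsame
      have h1 := hP1 j k hne hsame (hR j k hne hsame)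
      rw [h3.2] at h1
      exact absurd h1.2 (by norm_num)
    have hsingGi : ∀ a : Fin M, ∃ i, Gi a = {i} := by
      intro a
      obtain ⟨i, hi⟩ := hGi.1 a
      refine ⟨i, Finset.eq_singleton_iff_unique_mem.mpr ⟨hi, fun i' hi' => ?_⟩⟩
      by_contra hne'
      exact hnoSA i' i hne' ((hGi.2.2.2 i' i).mp ⟨a, hi', hi⟩)
    have hpsi_l1 : ∀ β, psiNorm G w Gi β = ∑ i, cw G w i * |β i| := by
      intro β
      unfold psiNorm
      have e : ∀ a ∈ (univ : Finset (Fin M)), inducedWeight G w Gi a * subNorm (Gi a) β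
          = ∑ i ∈ Gi a, cw G w i * |β i| := by
        intro a _
        obtain ⟨i, hi⟩ := hsingGi a
        rw [hi, subNorm_singleton, Finset.sum_singleton,
          inducedWeight_eq w hGi (show i ∈ Gi a by rw [hi]; exact Finset.mem_singleton_self i)]
      rw [Finset.sum_congr rfl e, partSum Gi hGi.2.1 hGi.2.2.1]
    by_cases hP4e : ∃ j k : Fin p, gj j ≠ gj k
    case pos =>
      obtain ⟨j₄, k₄, hg₄⟩ := hP4e
      have hne₄ : j₄ ≠ k₄ := by rintro rfl; exact hg₄ rfl
      have h4 := hP4 j₄ k₄ hne₄ (hnoSA j₄ k₄ hne₄) hg₄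
      have hwt_cw : ∀ (g : Fin M') (i : Fin p), i ∈ Gt g → wt g = cw G w i := by
        intro g i hi
        have h1 : g = gj i := memGt hi
        have h2 : Wq q₁ (wt g) = wt g := by
          unfold Wq
          rw [if_neg h4.1, h4.2]
          norm_num
        rw [← h2, h1]
        exact hkey i
      have hlqq_l1 : ∀ β, lqqNorm q₁ q₂ Gt wt β = ∑ i, cw G w i * |β i| := by
        intro β
        unfold lqqNorm
        rw [if_neg hq1, if_neg h4.1, h4.2]
        rw [show (1:ℝ)/1 = 1 by norm_num, Real.rpow_one]
        simp only [Real.rpow_one]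
        have e : ∀ g ∈ (univ : Finset (Fin M')), wt g * blockLqNorm q₂ (Gt g) β
            = ∑ i ∈ Gt g, cw G w i * |β i| := by
          intro g _
          rw [blockLq_one h3.1 h3.2, Finset.mul_sum]
          exact Finset.sum_congr rfl fun i hi => by rw [hwt_cw g i hi]
        rw [Finset.sum_congr rfl e, partSum Gt hGtdis (fun j => ⟨gj j, hgj j⟩)]
      rw [hlqq_l1 βs, hpsi_l1 βs] at hlt
      exact lt_irrefl _ hlt
    case neg =>
      push_neg at hP4e
      set g₀ := gj j₁ with hg₀
      have hGt₀ : Gt g₀ = univ := by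
        apply Finset.eq_univ_iff_forall.mpr
        intro i
        rw [hg₀, ← hP4e i j₁]
        exact hgj i
      have hlqq_c : ∀ β, lqqNorm q₁ q₂ Gt wt β = ∑ i, cw G w i * |β i| := by
        intro β
        have hbl0 : ∀ g, blockLqNorm q₂ (Gt g) β
            = if g = g₀ then (∑ i, |β i|) else 0 := by
          intro g
          have hgg : g = g₀ := by
            obtain ⟨i, hi⟩ := hGtne g
            rw [memGt hi, hg₀, hP4e i j₁]
          rw [if_pos hgg, hgg, blockLq_one h3.1 h3.2, hGt₀]
        have habs : (0:ℝ) ≤ ∑ i, |β i| := Finset.sum_nonneg fun i _ => abs_nonneg _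
        rw [lqq_single hq1 hwt g₀ habs hbl0, Finset.mul_sum]
        refine Finset.sum_congr rfl fun i _ => ?_
        have : Wq q₁ (wt g₀) = cw G w i := by
          rw [hg₀, ← hP4e i j₁]
          exact hkey i
        rw [this]
      rw [hlqq_c βs, hpsi_l1 βs] at hlt
      exact lt_irrefl _ hlt
end

section
/- Let G = {G_1,…,G_m} be a group structure on [p] with positive weights w, φ^G the overlapping group lasso norm with dual norm φ*, h_j = #{g : j ∈ G_g} the overlap degree of coordinate j, and H = diag(1/h_1,…,1/h_p). Then for every v ∈ ℝ^p, φ*(v) ≤ max_{g∈[m]} (1/w_g)‖(Hv)_{G_g}‖_2. Moreover, this bound is sharp: if v ≠ 0 and some group g₀ attaining the maximum max_{g∈[m]} (1/w_g)‖(Hv)_{G_g}‖_2 satisfies h_j = 1 for all j ∈ G_{g₀} and v_{G_{g₀}} ≠ 0, then φ*(v) = max_{g∈[m]} (1/w_g)‖(Hv)_{G_g}‖_2. -/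
/-!
Writing `Hv` for `v` divided coordinatewise by the overlap degrees, every pairing splits along the
groups, `βᵀv = ∑_g (β_{G_g})ᵀ(Hv)_{G_g}`, because coordinate `j` is counted `h_j` times. Cauchy–Schwarz
in each group bounds the `g`-th term by `w_g‖β_{G_g}‖ · (1/w_g)‖(Hv)_{G_g}‖`, and summing gives
`βᵀv ≤ φ^G(β) · max_g (1/w_g)‖(Hv)_{G_g}‖`.

For sharpness, if the maximising group `G_{g₀}` meets no other group, then `Hv = v` on `G_{g₀}`, and
the restriction `u` of `v` to `G_{g₀}` has `φ^G(u) = w_{g₀}‖v_{G_{g₀}}‖` and `uᵀv = ‖v_{G_{g₀}}‖²`, so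
`uᵀv / φ^G(u) = (1/w_{g₀})‖(Hv)_{G_{g₀}}‖` attains the bound.
-/

open Finset

/-- Overlap degree `h_j = #{g : j ∈ G_g}` of coordinate `j`. -/
def overlapDeg {p m : ℕ} (G : Fin m → Finset (Fin p)) (j : Fin p) : ℕ :=
  (univ.filter fun g => j ∈ G g).card

/-- The dual norm `φ*(v) = sup { βᵀv : φ^G(β) ≤ 1 }`. -/
noncomputable def glDualNorm {p m : ℕ} (G : Fin m → Finset (Fin p)) (w : Fin m → ℝ)
    (v : Fin p → ℝ) : ℝ :=
  sSup {x : ℝ | ∃ β : Fin p → ℝ, glNorm G w β ≤ 1 ∧ x = ∑ j, β j * v j}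

section GroupLasso

variable {p m : ℕ}

lemma subNorm_nonneg (T : Finset (Fin p)) (β : Fin p → ℝ) : 0 ≤ subNorm T β :=
  Real.sqrt_nonneg _

lemma subNorm_sq (T : Finset (Fin p)) (β : Fin p → ℝ) : subNorm T β ^ 2 = ∑ j ∈ T, β j ^ 2 :=
  Real.sq_sqrt (sum_nonneg fun j _ => sq_nonneg (β j))

lemma subNorm_pos {T : Finset (Fin p)} {β : Fin p → ℝ} (h : ∃ j ∈ T, β j ≠ 0) :
    0 < subNorm T β := by
  obtain ⟨j, hj, hβj⟩ := h
  exact Real.sqrt_pos.2 <|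
    (pow_pos (abs_pos.2 hβj) 2).trans_le <| by
      simpa only [sq_abs] using single_le_sum (fun i _ => sq_nonneg (β i)) hj

lemma subNorm_congr {T : Finset (Fin p)} {β γ : Fin p → ℝ} (h : ∀ j ∈ T, β j = γ j) :
    subNorm T β = subNorm T γ := by
  rw [subNorm, sum_congr rfl fun j hj => by rw [h j hj], subNorm]

lemma subNorm_smul (T : Finset (Fin p)) (c : ℝ) (β : Fin p → ℝ) :
    subNorm T (c • β) = |c| * subNorm T β := by
  simp only [subNorm, Pi.smul_apply, smul_eq_mul, mul_pow, ← mul_sum]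
  rw [Real.sqrt_mul (sq_nonneg c), Real.sqrt_sq_eq_abs]

lemma sum_mul_le_subNorm_mul_subNorm (T : Finset (Fin p)) (β γ : Fin p → ℝ) :
    ∑ j ∈ T, β j * γ j ≤ subNorm T β * subNorm T γ :=
  Real.sum_mul_le_sqrt_mul_sqrt T β γ

lemma sum_ite_mem_mul_self (T : Finset (Fin p)) (u : Fin p → ℝ) :
    ∑ j, (if j ∈ T then u j else 0) * u j = subNorm T u ^ 2 := by
  simp only [ite_mul, zero_mul, sum_ite_mem, univ_inter, ← sq, subNorm_sq]

variable {G : Fin m → Finset (Fin p)} {w : Fin m → ℝ}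

lemma glNorm_smul {c : ℝ} (hc : 0 ≤ c) (β : Fin p → ℝ) :
    glNorm G w (c • β) = c * glNorm G w β := by
  rw [glNorm, glNorm, mul_sum]
  exact sum_congr rfl fun g _ => by rw [subNorm_smul, abs_of_nonneg hc]; ring

lemma overlapDeg_pos {j : Fin p} (hj : ∃ g, j ∈ G g) : 0 < overlapDeg G j := by
  obtain ⟨g, hg⟩ := hj
  exact card_pos.2 ⟨g, mem_filter.2 ⟨mem_univ g, hg⟩⟩

lemma sum_sum_group_eq_sum_overlapDeg_mul (f : Fin p → ℝ) :
    ∑ g, ∑ j ∈ G g, f j = ∑ j, (overlapDeg G j : ℝ) * f j := by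
  rw [sum_comm' (s' := fun j => univ.filter fun g => j ∈ G g) (t' := univ) (by simp)]
  simp only [sum_const, nsmul_eq_mul, overlapDeg]

lemma disjoint_of_overlapDeg_eq_one {g₀ g : Fin m}
    (hdeg : ∀ j ∈ G g₀, overlapDeg G j = 1) (hg : g ≠ g₀) : Disjoint (G g) (G g₀) := by
  refine disjoint_right.2 fun j hj₀ hj => (hdeg j hj₀).not_gt ?_
  exact one_lt_card.2 ⟨g, mem_filter.2 ⟨mem_univ g, hj⟩, g₀, mem_filter.2 ⟨mem_univ g₀, hj₀⟩, hg⟩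

lemma glNorm_ite_mem_of_overlapDeg_eq_one {g₀ : Fin m}
    (hdeg : ∀ j ∈ G g₀, overlapDeg G j = 1) (u : Fin p → ℝ) :
    glNorm G w (fun j => if j ∈ G g₀ then u j else 0) = w g₀ * subNorm (G g₀) u := by
  rw [glNorm, sum_eq_single g₀ _ (by simp), subNorm_congr fun j hj => if_pos hj]
  intro g _ hg
  have hzero : ∀ j ∈ G g, (if j ∈ G g₀ then u j else 0) = 0 := fun j hj =>
    if_neg (disjoint_left.1 (disjoint_of_overlapDeg_eq_one hdeg hg) hj)
  rw [subNorm_congr hzero]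
  simp [subNorm]

lemma glDualNorm_le {v : Fin p → ℝ} {c : ℝ}
    (hc : ∀ β, glNorm G w β ≤ 1 → ∑ j, β j * v j ≤ c) : glDualNorm G w v ≤ c :=
  csSup_le ⟨0, 0, by simp [glNorm, subNorm], by simp⟩ (by rintro x ⟨β, hβ, rfl⟩; exact hc β hβ)

lemma sum_mul_le_glDualNorm {v β : Fin p → ℝ} {c : ℝ}
    (hc : ∀ β, glNorm G w β ≤ 1 → ∑ j, β j * v j ≤ c) (hβ : glNorm G w β ≤ 1) :
    ∑ j, β j * v j ≤ glDualNorm G w v :=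
  le_csSup ⟨c, by rintro x ⟨β, hβ, rfl⟩; exact hc β hβ⟩ ⟨β, hβ, rfl⟩

lemma sum_mul_div_glNorm_le_glDualNorm {v β : Fin p → ℝ} {c : ℝ}
    (hc : ∀ β, glNorm G w β ≤ 1 → ∑ j, β j * v j ≤ c) (hβ : 0 < glNorm G w β) :
    (∑ j, β j * v j) / glNorm G w β ≤ glDualNorm G w v := by
  have hnorm : glNorm G w ((glNorm G w β)⁻¹ • β) = 1 := by
    rw [glNorm_smul (inv_nonneg.2 hβ.le), inv_mul_cancel₀ hβ.ne']
  calc (∑ j, β j * v j) / glNorm G w β = ∑ j, ((glNorm G w β)⁻¹ • β) j * v j := by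
        rw [sum_div]
        exact sum_congr rfl fun j _ => by rw [Pi.smul_apply, smul_eq_mul]; ring
    _ ≤ glDualNorm G w v := sum_mul_le_glDualNorm hc hnorm.le

noncomputable def glDualBound (G : Fin m → Finset (Fin p)) (w : Fin m → ℝ) (v : Fin p → ℝ) : ℝ :=
  ⨆ g, (1 / w g) * subNorm (G g) (fun j => v j / (overlapDeg G j : ℝ))

lemma le_glDualBound (v : Fin p → ℝ) (g : Fin m) :
    (1 / w g) * subNorm (G g) (fun j => v j / (overlapDeg G j : ℝ)) ≤ glDualBound G w v := by
  unfold glDualBound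
  exact le_ciSup (f := fun g => (1 / w g) * subNorm (G g) _) (Finite.bddAbove_range _) g

lemma glDualBound_nonneg (hw : ∀ g, 0 ≤ w g) (v : Fin p → ℝ) : 0 ≤ glDualBound G w v :=
  Real.iSup_nonneg fun g => mul_nonneg (one_div_nonneg.2 (hw g)) (subNorm_nonneg _ _)

lemma sum_mul_eq_sum_sum_group_div_overlapDeg (hcover : ∀ j : Fin p, ∃ g, j ∈ G g)
    (β v : Fin p → ℝ) :
    ∑ j, β j * v j = ∑ g, ∑ j ∈ G g, β j * (v j / (overlapDeg G j : ℝ)) := by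
  rw [sum_sum_group_eq_sum_overlapDeg_mul]
  refine sum_congr rfl fun j _ => ?_
  have : (overlapDeg G j : ℝ) ≠ 0 := Nat.cast_ne_zero.2 (overlapDeg_pos (hcover j)).ne'
  field_simp

lemma sum_mul_le_glNorm_mul_glDualBound (hw : ∀ g, 0 < w g)
    (hcover : ∀ j : Fin p, ∃ g, j ∈ G g) (β v : Fin p → ℝ) :
    ∑ j, β j * v j ≤ glNorm G w β * glDualBound G w v := by
  rw [sum_mul_eq_sum_sum_group_div_overlapDeg hcover, glNorm, sum_mul]
  refine sum_le_sum fun g _ => ?_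
  set Hv : Fin p → ℝ := fun j => v j / (overlapDeg G j : ℝ)
  calc ∑ j ∈ G g, β j * Hv j ≤ subNorm (G g) β * subNorm (G g) Hv :=
        sum_mul_le_subNorm_mul_subNorm _ _ _
    _ = w g * subNorm (G g) β * ((1 / w g) * subNorm (G g) Hv) := by
        field_simp [(hw g).ne']
    _ ≤ w g * subNorm (G g) β * glDualBound G w v :=
        mul_le_mul_of_nonneg_left (le_glDualBound v g)
          (mul_nonneg (hw g).le (subNorm_nonneg _ _))

lemma sum_mul_le_glDualBound (hw : ∀ g, 0 < w g) (hcover : ∀ j : Fin p, ∃ g, j ∈ G g)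
    {β v : Fin p → ℝ} (hβ : glNorm G w β ≤ 1) :
    ∑ j, β j * v j ≤ glDualBound G w v :=
  (sum_mul_le_glNorm_mul_glDualBound hw hcover β v).trans <|
    mul_le_of_le_one_left (glDualBound_nonneg (fun g => (hw g).le) v) hβ

lemma glDualNorm_le_glDualBound (hw : ∀ g, 0 < w g) (hcover : ∀ j : Fin p, ∃ g, j ∈ G g)
    (v : Fin p → ℝ) : glDualNorm G w v ≤ glDualBound G w v :=
  glDualNorm_le fun _ => sum_mul_le_glDualBound hw hcover

lemma subNorm_div_le_glDualNorm (hw : ∀ g, 0 < w g) (hcover : ∀ j : Fin p, ∃ g, j ∈ G g)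
    {v : Fin p → ℝ} {g₀ : Fin m} (hdeg : ∀ j ∈ G g₀, overlapDeg G j = 1)
    (hv : ∃ j ∈ G g₀, v j ≠ 0) :
    subNorm (G g₀) v / w g₀ ≤ glDualNorm G w v := by
  have hS := subNorm_pos hv
  have hnorm : glNorm G w (fun j => if j ∈ G g₀ then v j else 0) = w g₀ * subNorm (G g₀) v :=
    glNorm_ite_mem_of_overlapDeg_eq_one hdeg v
  have hratio := sum_mul_div_glNorm_le_glDualNorm (fun _ => sum_mul_le_glDualBound (v := v) hw hcover)
    (hnorm ▸ mul_pos (hw g₀) hS)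
  rwa [hnorm, sum_ite_mem_mul_self, sq, mul_comm (w g₀), mul_div_mul_left _ _ hS.ne'] at hratio

end GroupLasso

theorem glDualNorm_le_and_sharp_general {p m : ℕ}
    (G : Fin m → Finset (Fin p)) (w : Fin m → ℝ)
    (hw : ∀ g, 0 < w g) (hcover : ∀ j : Fin p, ∃ g, j ∈ G g) :
    (∀ v : Fin p → ℝ,
      glDualNorm G w v ≤
        ⨆ g : Fin m, (1 / w g) * subNorm (G g) (fun j => v j / (overlapDeg G j : ℝ))) ∧
    (∀ v : Fin p → ℝ, v ≠ 0 →
      ∀ g₀ : Fin m,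
        (∀ g : Fin m, (1 / w g) * subNorm (G g) (fun j => v j / (overlapDeg G j : ℝ)) ≤
          (1 / w g₀) * subNorm (G g₀) (fun j => v j / (overlapDeg G j : ℝ))) →
        (∀ j ∈ G g₀, overlapDeg G j = 1) →
        (∃ j ∈ G g₀, v j ≠ 0) →
        glDualNorm G w v =
          ⨆ g : Fin m, (1 / w g) * subNorm (G g) (fun j => v j / (overlapDeg G j : ℝ))) := by
  have hle := glDualNorm_le_glDualBound hw hcover
  refine ⟨hle, fun v _ g₀ hmax hdeg hv => (hle v).antisymm ?_⟩
  have : Nonempty (Fin m) := ⟨g₀⟩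
  have hbound : glDualBound G w v = subNorm (G g₀) v / w g₀ := by
    rw [glDualBound, le_antisymm (ciSup_le hmax) (le_glDualBound v g₀), one_div_mul_eq_div]
    exact congrArg (· / w g₀) (subNorm_congr fun j hj => by simp [hdeg j hj])
  exact hbound ▸ subNorm_div_le_glDualNorm hw hcover hdeg hv

/-- with `H = diag(1/h_1,…,1/h_p)`, the dual norm of the overlapping
group lasso norm satisfies `φ*(v) ≤ max_{g} (1/w_g)‖(Hv)_{G_g}‖₂` for every `v`;
moreover the bound is sharp: it holds with equality whenever `v ≠ 0` and some group
`g₀` attaining the maximum has `h_j = 1` for all `j ∈ G_{g₀}` and `v_{G_{g₀}} ≠ 0`. -/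
theorem glDualNorm_le_and_sharp {p m : ℕ} (hp : 0 < p) (hm : 0 < m)
    (G : Fin m → Finset (Fin p)) (w : Fin m → ℝ)
    (hw : ∀ g, 0 < w g) (hcover : ∀ j : Fin p, ∃ g, j ∈ G g) :
    (∀ v : Fin p → ℝ,
      glDualNorm G w v ≤
        ⨆ g : Fin m, (1 / w g) * subNorm (G g) (fun j => v j / (overlapDeg G j : ℝ))) ∧
    (∀ v : Fin p → ℝ, v ≠ 0 →
      ∀ g₀ : Fin m,
        (∀ g : Fin m, (1 / w g) * subNorm (G g) (fun j => v j / (overlapDeg G j : ℝ)) ≤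
          (1 / w g₀) * subNorm (G g₀) (fun j => v j / (overlapDeg G j : ℝ))) →
        (∀ j ∈ G g₀, overlapDeg G j = 1) →
        (∃ j ∈ G g₀, v j ≠ 0) →
        glDualNorm G w v =
          ⨆ g : Fin m, (1 / w g) * subNorm (G g) (fun j => v j / (overlapDeg G j : ℝ))) :=
  glDualNorm_le_and_sharp_general G w hw hcover
end

section
/- Let G = {G_1,…,G_m} be a group structure on [p] with positive weights w, and let 𝒢 = {𝒢_1,…,𝒢_𝓂} be its overlapping-induced partition with weights 𝓌_𝓰 = Σ_{g∈F(𝓰)} w_g. Let S ⊆ [m] be a nonempty set of groups, let S̄ = {g ∈ [m] : G_g ∩ G_S ≠ ∅}, and suppose |F^{-1}(g)| ≤ K for every g ∈ S̄. Then, with F^{-1}(S) = ⋃_{g∈S} F^{-1}(g), (Σ_{𝓰∈F^{-1}(S)} 𝓌_𝓰²)/(min_{𝓰∈[𝓂]} 𝓌_𝓰²) ≤ K · ((Σ_{g∈S̄} w_g²)·(max_{j∈G_{S̄}} h_j))/(min_{g∈[m]}(w_g² h_min^g)). -/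
open Finset

/-- comparison of the weight sums for the induced partition and the
original overlapping groups.  Here `S ⊆ [m]` is a nonempty set of groups,
`S̄ = {g : G_g ∩ G_S ≠ ∅}` is its augmentation, `F⁻¹(S) = {𝓰 : ∃ g ∈ S, 𝒢_𝓰 ⊆ G_g}`,
and `|F⁻¹(g)| ≤ K` for all `g ∈ S̄`. -/
theorem induced_weight_sum_bound {p m M : ℕ} (hm : 0 < m) (hM : 0 < M)
    (G : Fin m → Finset (Fin p)) (w : Fin m → ℝ)
    (hw : ∀ g, 0 < w g) (hcover : ∀ j : Fin p, ∃ g, j ∈ G g)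
    (hGne : ∀ g, (G g).Nonempty)
    (Gi : Fin M → Finset (Fin p)) (hGi : IsInducedPartition G Gi)
    (S : Finset (Fin m)) (hS : S.Nonempty)
    (Sbar : Finset (Fin m))
    (hSbar : Sbar = univ.filter fun g => ((G g) ∩ (S.biUnion G)).Nonempty)
    (K : ℝ)
    (hK : ∀ g ∈ Sbar, ((univ.filter fun a : Fin M => Gi a ⊆ G g).card : ℝ) ≤ K) :
    (∑ a ∈ univ.filter (fun a : Fin M => ∃ g ∈ S, Gi a ⊆ G g), (inducedWeight G w Gi a) ^ 2) /
        (⨅ a : Fin M, (inducedWeight G w Gi a) ^ 2)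
      ≤ K * ((∑ g ∈ Sbar, (w g) ^ 2) * (⨆ j ∈ Sbar.biUnion G, (overlapDeg G j : ℝ))) /
        (⨅ g : Fin m, (w g) ^ 2 * (((G g).inf' (hGne g) (overlapDeg G) : ℕ) : ℝ)) := by
  haveI : Nonempty (Fin m) := Fin.pos_iff_nonempty.mp hm
  haveI : Nonempty (Fin M) := Fin.pos_iff_nonempty.mp hM
  obtain ⟨hGiNe, hGiDisj, hGiCover, hGiPat⟩ := hGi
  -- the set `F(a)` of groups containing block `a` equals the membership set of any j ∈ Gi a
  have hFa : ∀ (a : Fin M) (j : Fin p), j ∈ Gi a →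
      (univ.filter fun g => Gi a ⊆ G g) = (univ.filter fun g => j ∈ G g) := by
    intro a j hj
    ext g
    simp only [mem_filter, mem_univ, true_and]
    constructor
    · intro h; exact h hj
    · intro hjg k hk
      exact ((hGiPat j k).mp ⟨a, hj, hk⟩ g).mp hjg
  have hdeg1 : ∀ j : Fin p, 1 ≤ overlapDeg G j := by
    intro j
    obtain ⟨g, hg⟩ := hcover j
    exact Finset.card_pos.mpr ⟨g, by simp [hg]⟩
  set T := Sbar.biUnion G with hT
  set maxh := ⨆ j ∈ T, (overlapDeg G j : ℝ) with hmaxh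
  have hle_maxh : ∀ j ∈ T, (overlapDeg G j : ℝ) ≤ maxh := by
    intro j hj
    have hb : BddAbove (Set.range fun j : Fin p => ⨆ _ : j ∈ T, (overlapDeg G j : ℝ)) :=
      Set.Finite.bddAbove (Set.finite_range _)
    calc (overlapDeg G j : ℝ) = ⨆ _ : j ∈ T, (overlapDeg G j : ℝ) :=
        (ciSup_pos (f := fun _ : j ∈ T => ((overlapDeg G j : ℕ) : ℝ)) hj).symm
      _ ≤ maxh := le_ciSup hb j
  -- Sbar and T are nonempty
  obtain ⟨g0, hg0S⟩ := hS
  obtain ⟨j0, hj0⟩ := hGne g0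
  have hg0Sbar : g0 ∈ Sbar := by
    rw [hSbar]
    refine mem_filter.mpr ⟨mem_univ _, ⟨j0, mem_inter.mpr ⟨hj0, ?_⟩⟩⟩
    exact mem_biUnion.mpr ⟨g0, hg0S, hj0⟩
  have hj0T : j0 ∈ T := mem_biUnion.mpr ⟨g0, hg0Sbar, hj0⟩
  have hmaxh0 : (0:ℝ) ≤ maxh :=
    le_trans (by positivity) (hle_maxh j0 hj0T)
  have hK0 : (0:ℝ) ≤ K := le_trans (Nat.cast_nonneg _) (hK g0 hg0Sbar)
  -- set notation
  set A := univ.filter (fun a : Fin M => ∃ g ∈ S, Gi a ⊆ G g) with hAdef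
  -- for a ∈ A, F(a) ⊆ Sbar
  have hFaSbar : ∀ a ∈ A, (univ.filter fun g => Gi a ⊆ G g) ⊆ Sbar := by
    intro a ha g' hg'
    obtain ⟨j, hj⟩ := hGiNe a
    obtain ⟨g, hgS, hsub⟩ := (mem_filter.mp ha).2
    have hjg' : j ∈ G g' := (mem_filter.mp hg').2 hj
    rw [hSbar]
    exact mem_filter.mpr ⟨mem_univ _, ⟨j, mem_inter.mpr ⟨hjg', mem_biUnion.mpr ⟨g, hgS, hsub hj⟩⟩⟩⟩
  -- Per-block bound on the square of the induced weight
  have hblock : ∀ a ∈ A, (inducedWeight G w Gi a) ^ 2 ≤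
      maxh * ∑ g ∈ Sbar, (if Gi a ⊆ G g then (w g) ^ 2 else 0) := by
    intro a ha
    obtain ⟨j, hj⟩ := hGiNe a
    have hcard : ((univ.filter fun g => Gi a ⊆ G g).card : ℝ) = (overlapDeg G j : ℝ) := by
      rw [hFa a j hj]; rfl
    have hjT : j ∈ T := by
      obtain ⟨g, hgS, hsub⟩ := (mem_filter.mp ha).2
      have : g ∈ Sbar := hFaSbar a ha (mem_filter.mpr ⟨mem_univ _, hsub⟩)
      exact mem_biUnion.mpr ⟨g, this, hsub hj⟩
    have hCS : (inducedWeight G w Gi a) ^ 2 ≤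
        ((univ.filter fun g => Gi a ⊆ G g).card : ℝ) *
          ∑ g ∈ univ.filter (fun g => Gi a ⊆ G g), (w g) ^ 2 :=
      sq_sum_le_card_mul_sum_sq
    have hsum_eq : ∑ g ∈ univ.filter (fun g => Gi a ⊆ G g), (w g) ^ 2 =
        ∑ g ∈ Sbar, (if Gi a ⊆ G g then (w g) ^ 2 else 0) := by
      rw [← Finset.sum_filter]
      apply Finset.sum_congr _ (fun _ _ => rfl)
      ext g
      simp only [mem_filter, mem_univ, true_and]
      exact ⟨fun h => ⟨hFaSbar a ha (mem_filter.mpr ⟨mem_univ _, h⟩), h⟩, fun h => h.2⟩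
    calc (inducedWeight G w Gi a) ^ 2
        ≤ ((univ.filter fun g => Gi a ⊆ G g).card : ℝ) *
            ∑ g ∈ univ.filter (fun g => Gi a ⊆ G g), (w g) ^ 2 := hCS
      _ ≤ maxh * ∑ g ∈ univ.filter (fun g => Gi a ⊆ G g), (w g) ^ 2 := by
          apply mul_le_mul_of_nonneg_right _ (Finset.sum_nonneg fun g _ => sq_nonneg _)
          rw [hcard]; exact hle_maxh j hjT
      _ = maxh * ∑ g ∈ Sbar, (if Gi a ⊆ G g then (w g) ^ 2 else 0) := by rw [hsum_eq]
  -- Numerator bound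
  have hnum : (∑ a ∈ A, (inducedWeight G w Gi a) ^ 2) ≤
      K * ((∑ g ∈ Sbar, (w g) ^ 2) * maxh) := by
    calc (∑ a ∈ A, (inducedWeight G w Gi a) ^ 2)
        ≤ ∑ a ∈ A, maxh * ∑ g ∈ Sbar, (if Gi a ⊆ G g then (w g) ^ 2 else 0) :=
          Finset.sum_le_sum hblock
      _ = maxh * ∑ g ∈ Sbar, ∑ a ∈ A, (if Gi a ⊆ G g then (w g) ^ 2 else 0) := by
          rw [← Finset.mul_sum, Finset.sum_comm]
      _ = maxh * ∑ g ∈ Sbar, ((A.filter fun a => Gi a ⊆ G g).card : ℝ) * (w g) ^ 2 := by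
          congr 1
          apply Finset.sum_congr rfl
          intro g _
          rw [← Finset.sum_filter, Finset.sum_const, nsmul_eq_mul]
      _ ≤ maxh * ∑ g ∈ Sbar, K * (w g) ^ 2 := by
          apply mul_le_mul_of_nonneg_left _ hmaxh0
          apply Finset.sum_le_sum
          intro g hg
          apply mul_le_mul_of_nonneg_right _ (sq_nonneg _)
          refine le_trans ?_ (hK g hg)
          exact_mod_cast Finset.card_le_card
            (Finset.filter_subset_filter _ (Finset.subset_univ _))
      _ = K * ((∑ g ∈ Sbar, (w g) ^ 2) * maxh) := by rw [← Finset.mul_sum]; ring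
  -- Denominator comparison
  set D2 := ⨅ g : Fin m, (w g) ^ 2 * (((G g).inf' (hGne g) (overlapDeg G) : ℕ) : ℝ) with hD2
  have hD2pos : 0 < D2 := by
    obtain ⟨g1, hg1⟩ := Finite.exists_min
      (fun g : Fin m => (w g) ^ 2 * (((G g).inf' (hGne g) (overlapDeg G) : ℕ) : ℝ))
    have h1 : (1:ℝ) ≤ (((G g1).inf' (hGne g1) (overlapDeg G) : ℕ) : ℝ) := by
      have : 1 ≤ (G g1).inf' (hGne g1) (overlapDeg G) :=
        Finset.le_inf' _ _ fun j _ => hdeg1 j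
      exact_mod_cast this
    have : 0 < (w g1) ^ 2 * (((G g1).inf' (hGne g1) (overlapDeg G) : ℕ) : ℝ) :=
      mul_pos (pow_pos (hw g1) 2) (lt_of_lt_of_le one_pos h1)
    exact lt_of_lt_of_le this (le_ciInf hg1)
  have hD1 : D2 ≤ ⨅ a : Fin M, (inducedWeight G w Gi a) ^ 2 := by
    apply le_ciInf
    intro a
    obtain ⟨j, hj⟩ := hGiNe a
    have hFaEq := hFa a j hj
    have hFaNe : (univ.filter fun g => Gi a ⊆ G g).Nonempty := by
      obtain ⟨g, hg⟩ := hcover j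
      rw [hFaEq]
      exact ⟨g, mem_filter.mpr ⟨mem_univ _, hg⟩⟩
    obtain ⟨gm, hgmF, hgmmin⟩ := Finset.exists_min_image _ w hFaNe
    have hjgm : j ∈ G gm := by
      have := hgmF; rw [hFaEq] at this; exact (mem_filter.mp this).2
    have hcard : ((univ.filter fun g => Gi a ⊆ G g).card : ℝ) = (overlapDeg G j : ℝ) := by
      rw [hFaEq]; rfl
    have hsumlb : ((univ.filter fun g => Gi a ⊆ G g).card : ℝ) * w gm ≤
        inducedWeight G w Gi a := by
      rw [← nsmul_eq_mul]
      exact Finset.card_nsmul_le_sum _ _ _ fun g hg => hgmmin g hg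
    have hcard1 : (1:ℝ) ≤ ((univ.filter fun g => Gi a ⊆ G g).card : ℝ) := by
      rw [hcard]; exact_mod_cast hdeg1 j
    have hlhs0 : (0:ℝ) ≤ ((univ.filter fun g => Gi a ⊆ G g).card : ℝ) * w gm :=
      mul_nonneg (by linarith) (hw gm).le
    have hsq : (((univ.filter fun g => Gi a ⊆ G g).card : ℝ) * w gm) ^ 2 ≤
        (inducedWeight G w Gi a) ^ 2 := by
      apply pow_le_pow_left₀ hlhs0 hsumlb
    have hinf_le : (((G gm).inf' (hGne gm) (overlapDeg G) : ℕ) : ℝ) ≤ (overlapDeg G j : ℝ) :=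
      by exact_mod_cast Finset.inf'_le (overlapDeg G) hjgm
    have key : (w gm) ^ 2 * (((G gm).inf' (hGne gm) (overlapDeg G) : ℕ) : ℝ) ≤
        (inducedWeight G w Gi a) ^ 2 := by
      refine le_trans ?_ hsq
      have hw2 : (0:ℝ) ≤ (w gm) ^ 2 := sq_nonneg _
      have hc := hcard
      calc (w gm) ^ 2 * (((G gm).inf' (hGne gm) (overlapDeg G) : ℕ) : ℝ)
          ≤ (w gm) ^ 2 * (overlapDeg G j : ℝ) := mul_le_mul_of_nonneg_left hinf_le hw2
        _ ≤ (w gm) ^ 2 * ((overlapDeg G j : ℝ) * (overlapDeg G j : ℝ)) := by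
            apply mul_le_mul_of_nonneg_left _ hw2
            nlinarith [hcard1, hcard.symm ▸ hcard1]
        _ = (((univ.filter fun g => Gi a ⊆ G g).card : ℝ) * w gm) ^ 2 := by
            rw [hcard]; ring
    refine le_trans ?_ key
    exact ciInf_le (Set.Finite.bddBelow (Set.finite_range _)) gm
  -- conclude
  have hD1pos : 0 < ⨅ a : Fin M, (inducedWeight G w Gi a) ^ 2 := lt_of_lt_of_le hD2pos hD1
  have hN2 : 0 ≤ K * ((∑ g ∈ Sbar, (w g) ^ 2) * maxh) :=
    mul_nonneg hK0 (mul_nonneg (Finset.sum_nonneg fun g _ => sq_nonneg _) hmaxh0)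
  exact div_le_div₀ hN2 hnum hD2pos hD1
end

section
/- Let m and s be positive integers with s ≤ m, and let A = {a ∈ {0,1}^m : Σ_{j=1}^m a_j ≤ s}. Then there exists a subset A_s ⊆ A of cardinality at least (C(m,s) − 2)/(C(m,⌊s/2⌋)·2^{s/2}) such that any two distinct elements a, b ∈ A_s satisfy ‖a − b‖₂ > √(s/2); that is, the √(s/2)-packing number of A in the Euclidean metric is at least (C(m,s) − 2)/(C(m,⌊s/2⌋)·2^{s/2}). -/
open Finset
open scoped symmDiff

/-!
Take a family of `s`-subsets of `Fin m` that is maximal subject to pairwise symmetric differences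
of size `> s/2`. By maximality the Hamming balls of radius `⌊s/2⌋` around its members cover all
`C(m,s)` subsets of size `s`, and such a ball has at most
`∑_{j ≤ ⌊s/2⌋} C(m,j) ≤ (⌊s/2⌋ + 1) C(m,⌊s/2⌋) ≤ 2^{s/2} C(m,⌊s/2⌋)` elements. For `0/1`-vectors the
squared Euclidean distance is the Hamming distance, so the indicator vectors of the family form
the packing.
-/

theorem Finset.exists_pairwise_subset_forall_mem_exists_not {α : Type*} [DecidableEq α]
    (S : Finset α) {far : α → α → Prop} [Std.Symm far] (hirrefl : ∀ x, ¬ far x x) :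
    ∃ P ⊆ S, (P : Set α).Pairwise far ∧ ∀ x ∈ S, ∃ p ∈ P, ¬ far x p := by
  classical
  obtain ⟨P, hP, hmax⟩ :=
    (S.powerset.filter fun P : Finset α => (P : Set α).Pairwise far).exists_max_image card
      ⟨∅, by simp⟩
  rw [mem_filter, mem_powerset] at hP
  refine ⟨P, hP.1, hP.2, fun x hx => ?_⟩
  by_contra! hfarP
  have hxP : x ∉ P := fun hxP => hirrefl x (hfarP x hxP)
  have hins : (↑(insert x P) : Set α).Pairwise far := by
    rw [coe_insert, Set.pairwise_insert_of_symm_of_notMem hxP]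
    exact ⟨hP.2, hfarP⟩
  have := hmax (insert x P) (mem_filter.2 ⟨mem_powerset.2 (insert_subset hx hP.1), hins⟩)
  rw [card_insert_of_notMem hxP] at this
  omega

theorem Finset.exists_pairwise_subset_card_le_mul {α : Type*} [DecidableEq α]
    (S : Finset α) {far : α → α → Prop} [DecidableRel far] [Std.Symm far]
    (hirrefl : ∀ x, ¬ far x x) {B : ℕ} (hball : ∀ p ∈ S, #{x ∈ S | ¬ far x p} ≤ B) :
    ∃ P ⊆ S, (P : Set α).Pairwise far ∧ #S ≤ #P * B := by
  obtain ⟨P, hPS, hPfar, hcover⟩ := S.exists_pairwise_subset_forall_mem_exists_not hirrefl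
  refine ⟨P, hPS, hPfar, ?_⟩
  calc #S ≤ #(P.biUnion fun p => {x ∈ S | ¬ far x p}) := card_le_card fun x hx => by
          obtain ⟨p, hp, hxp⟩ := hcover x hx
          exact mem_biUnion.2 ⟨p, hp, mem_filter.2 ⟨hx, hxp⟩⟩
    _ ≤ #P * B := card_biUnion_le_card_mul _ _ _ fun p hp => hball p (hPS hp)

theorem Finset.card_filter_card_symmDiff_le {α : Type*} [Fintype α] [DecidableEq α]
    (T : Finset α) (t : ℕ) :
    #{U : Finset α | #(U ∆ T) ≤ t} ≤ ∑ j ∈ range (t + 1), (Fintype.card α).choose j := by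
  calc #{U : Finset α | #(U ∆ T) ≤ t}
      ≤ #((range (t + 1)).biUnion fun j => powersetCard j (univ : Finset α)) := by
        refine card_le_card_of_injOn (· ∆ T) (fun U hU => ?_) ?_
        · rw [mem_coe, mem_filter_univ] at hU
          simp only [coe_biUnion, coe_range, Set.mem_Iio, mem_coe, mem_powersetCard_univ,
            Set.mem_iUnion, exists_prop]
          exact ⟨_, Nat.lt_succ_of_le hU, rfl⟩
        · intro U _ V _ h
          simpa using congrArg (· ∆ T) h
    _ ≤ ∑ j ∈ range (t + 1), #(powersetCard j (univ : Finset α)) := card_biUnion_le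
    _ = ∑ j ∈ range (t + 1), (Fintype.card α).choose j := by simp

theorem Nat.choose_le_choose_of_le_of_le_half {n r t : ℕ} (hrt : r ≤ t) (ht : t ≤ n / 2) :
    n.choose r ≤ n.choose t := by
  induction hrt using Nat.decreasingInduction with
  | self => rfl
  | of_succ k hk ih => exact (Nat.choose_le_succ_of_lt_half_left (hk.trans_le ht)).trans ih

theorem Nat.sum_range_choose_le_mul {n t : ℕ} (ht : t ≤ n / 2) :
    ∑ j ∈ range (t + 1), n.choose j ≤ (t + 1) * n.choose t := by
  simpa using sum_le_card_nsmul (range (t + 1)) _ _ fun j hj =>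
    Nat.choose_le_choose_of_le_of_le_half (Nat.lt_succ_iff.1 (mem_range.1 hj)) ht

theorem Real.natCast_div_two_add_one_le_two_rpow (s : ℕ) :
    ((s / 2 : ℕ) + 1 : ℝ) ≤ 2 ^ ((s : ℝ) / 2) := by
  calc ((s / 2 : ℕ) + 1 : ℝ) ≤ (2 : ℝ) ^ (s / 2) := by exact_mod_cast Nat.lt_two_pow_self
    _ = 2 ^ ((s / 2 : ℕ) : ℝ) := (Real.rpow_natCast 2 _).symm
    _ ≤ 2 ^ ((s : ℝ) / 2) := Real.rpow_le_rpow_of_exponent_le one_le_two Nat.cast_div_le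

section BinaryVectors

variable {ι : Type*} [Fintype ι] [DecidableEq ι]

theorem Finset.sum_indicator_one (U : Finset ι) :
    ∑ j, (U : Set ι).indicator (1 : ι → ℝ) j = #U := by
  simp [Set.indicator_apply]

theorem Finset.sum_indicator_one_sub_indicator_one_sq (U V : Finset ι) :
    ∑ j, ((U : Set ι).indicator (1 : ι → ℝ) j - (V : Set ι).indicator 1 j) ^ 2 =
      (#(U ∆ V) : ℝ) := by
  rw [← sum_indicator_one (U ∆ V)]
  refine sum_congr rfl fun j _ => ?_
  by_cases hU : j ∈ U <;> by_cases hV : j ∈ V <;> simp [Set.mem_symmDiff, hU, hV]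

end BinaryVectors

theorem Finset.exists_powersetCard_packing_card_symmDiff {α : Type*} [Fintype α] [DecidableEq α]
    {s : ℕ} (hs : s ≤ Fintype.card α) :
    ∃ P ⊆ powersetCard s (univ : Finset α),
      (P : Set (Finset α)).Pairwise (fun U V => s < 2 * #(U ∆ V)) ∧
      (Fintype.card α).choose s ≤ #P * ((s / 2 + 1) * (Fintype.card α).choose (s / 2)) := by
  have : Std.Symm fun U V : Finset α => s < 2 * #(U ∆ V) := ⟨fun U V h => by rwa [symmDiff_comm]⟩
  simpa using (powersetCard s (univ : Finset α)).exists_pairwise_subset_card_le_mul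
    (far := fun U V => s < 2 * #(U ∆ V)) (by simp) fun T _ => calc
      #{U ∈ powersetCard s univ | ¬ s < 2 * #(U ∆ T)} ≤ #{U : Finset α | #(U ∆ T) ≤ s / 2} :=
        card_le_card fun U hU => (mem_filter_univ U).2 (by rw [mem_filter, not_lt] at hU; omega)
      _ ≤ ∑ j ∈ range (s / 2 + 1), (Fintype.card α).choose j := card_filter_card_symmDiff_le T _
      _ ≤ _ := Nat.sum_range_choose_le_mul (Nat.div_le_div_right hs)

theorem binary_packing_general (m s : ℕ) (hsm : s ≤ m) :
    ∃ As : Finset (Fin m → ℝ),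
      (∀ a ∈ As, (∀ j, a j = 0 ∨ a j = 1) ∧ (∑ j, a j) ≤ (s : ℝ)) ∧
      ((m.choose s : ℝ) - 2) / ((m.choose (s / 2) : ℝ) * (2 : ℝ) ^ ((s : ℝ) / 2))
        ≤ (As.card : ℝ) ∧
      (∀ a ∈ As, ∀ b ∈ As, a ≠ b →
        Real.sqrt ((s : ℝ) / 2) < Real.sqrt (∑ j, (a j - b j) ^ 2)) := by
  obtain ⟨P, hPS, hPfar, hcard⟩ :=
    exists_powersetCard_packing_card_symmDiff (α := Fin m) (s := s) (by simpa using hsm)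
  rw [Fintype.card_fin] at hcard
  let binaryVec (U : Finset (Fin m)) : Fin m → ℝ := (U : Set (Fin m)).indicator 1
  have hinj : Function.Injective binaryVec := fun U V h => by
    exact_mod_cast Set.indicator_one_inj ℝ h
  refine ⟨P.image binaryVec, ?_, ?_, ?_⟩
  · simp only [forall_mem_image]
    intro U hU
    refine ⟨fun j => ?_, ?_⟩
    · by_cases hj : j ∈ U <;> simp [binaryVec, hj]
    · rw [sum_indicator_one, (mem_powersetCard.1 (hPS hU)).2]
  · rw [card_image_of_injective _ hinj]
    have hpos : (0 : ℝ) < m.choose (s / 2) := by exact_mod_cast Nat.choose_pos (by omega)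
    rw [div_le_iff₀ (by positivity)]
    calc (m.choose s : ℝ) - 2 ≤ m.choose s := by linarith
      _ ≤ #P * ((s / 2 + 1 : ℕ) * m.choose (s / 2)) := by exact_mod_cast hcard
      _ ≤ #P * (m.choose (s / 2) * 2 ^ ((s : ℝ) / 2)) := by
          rw [mul_comm ((s / 2 + 1 : ℕ) : ℝ)]
          push_cast
          gcongr
          exact Real.natCast_div_two_add_one_le_two_rpow s
  · simp only [forall_mem_image]
    intro U hU V hV hne
    have hfar : s < 2 * #(U ∆ V) := hPfar hU hV (ne_of_apply_ne binaryVec hne)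
    rw [sum_indicator_one_sub_indicator_one_sq]
    refine Real.sqrt_lt_sqrt (by positivity) ?_
    rw [div_lt_iff₀ two_pos]
    exact_mod_cast (by omega : s < #(U ∆ V) * 2)

/-- packing number for binary sets.  Within
`A = {a ∈ {0,1}^m : Σ_j a_j ≤ s}` there is a subset `As` of cardinality at least
`(C(m,s) − 2)/(C(m,⌊s/2⌋)·2^{s/2})` whose distinct elements are pairwise at
Euclidean distance greater than `√(s/2)`. -/
theorem binary_packing (m s : ℕ) (hs : 0 < s) (hsm : s ≤ m) :
    ∃ As : Finset (Fin m → ℝ),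
      (∀ a ∈ As, (∀ j, a j = 0 ∨ a j = 1) ∧ (∑ j, a j) ≤ (s : ℝ)) ∧
      ((m.choose s : ℝ) - 2) / ((m.choose (s / 2) : ℝ) * (2 : ℝ) ^ ((s : ℝ) / 2))
        ≤ (As.card : ℝ) ∧
      (∀ a ∈ As, ∀ b ∈ As, a ≠ b →
        Real.sqrt ((s : ℝ) / 2) < Real.sqrt (∑ j, (a j - b j) ^ 2)) :=
  binary_packing_general m s hsm
end

section
/- Let G = {G_1,…,G_m} be a group structure on [p] with positive weights w and overlapping group lasso norm φ^G. Fix β₀ ∈ ℝ^p, and let S = S(β₀) be its group support and S̄ = S̄(β₀) its augmented group support. Then φ^G is decomposable with respect to the pair {M(S), M^⊥(S̄)}: for all a ∈ M(S) and all b ∈ M^⊥(S̄), φ^G(a + b) = φ^G(a) + φ^G(b). -/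
open Finset

/-- Group support `S(β) = {g : G_g ∩ supp(β) ≠ ∅}`. -/
noncomputable def groupSupport {p m : ℕ} (G : Fin m → Finset (Fin p)) (β : Fin p → ℝ) :
    Finset (Fin m) :=
  univ.filter fun g => ∃ j ∈ G g, β j ≠ 0

/-- Augmented group support `S̄(β) = {g : G_g ∩ G_{S(β)} ≠ ∅}`. -/
noncomputable def augGroupSupport {p m : ℕ} (G : Fin m → Finset (Fin p)) (β : Fin p → ℝ) :
    Finset (Fin m) :=
  univ.filter fun g => ∃ j ∈ G g, j ∈ (groupSupport G β).biUnion G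

/-- Projection `β_{M(I)}`: the vector agreeing with `β` on `G_I` and zero elsewhere. -/
def projOn {p m : ℕ} (G : Fin m → Finset (Fin p)) (I : Finset (Fin m))
    (β : Fin p → ℝ) : Fin p → ℝ :=
  fun j => if j ∈ I.biUnion G then β j else 0

/-- Projection `β_{M^⊥(I)} = β − β_{M(I)}`. -/
def projOff {p m : ℕ} (G : Fin m → Finset (Fin p)) (I : Finset (Fin m))
    (β : Fin p → ℝ) : Fin p → ℝ :=
  fun j => if j ∈ I.biUnion G then 0 else β j

/-- the overlapping group lasso norm is decomposable with respect to
the pair `{M(S), M^⊥(S̄)}`: for `a ∈ M(S(β₀))` and `b ∈ M^⊥(S̄(β₀))`,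
`φ^G(a+b) = φ^G(a) + φ^G(b)`. -/
theorem glNorm_decomposable {p m : ℕ}
    (G : Fin m → Finset (Fin p)) (w : Fin m → ℝ)
    (hw : ∀ g, 0 < w g) (hcover : ∀ j : Fin p, ∃ g, j ∈ G g)
    (β₀ : Fin p → ℝ) (a b : Fin p → ℝ)
    (ha : ∀ j : Fin p, j ∉ (groupSupport G β₀).biUnion G → a j = 0)
    (hb : ∀ j : Fin p, j ∈ (augGroupSupport G β₀).biUnion G → b j = 0) :
    glNorm G w (a + b) = glNorm G w a + glNorm G w b := by
  unfold glNorm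
  rw [← Finset.sum_add_distrib]
  apply Finset.sum_congr rfl
  intro g _
  have key : (∀ j ∈ G g, b j = 0) ∨ (∀ j ∈ G g, a j = 0) := by
    by_cases hg : g ∈ augGroupSupport G β₀
    · left
      intro j hj
      exact hb j (Finset.mem_biUnion.mpr ⟨g, hg, hj⟩)
    · right
      intro j hj
      apply ha
      intro hjS
      exact hg (by
        simp only [augGroupSupport, Finset.mem_filter, Finset.mem_univ, true_and]
        exact ⟨j, hj, hjS⟩)
  have hzero : ∀ (c : Fin p → ℝ), (∀ j ∈ G g, c j = 0) → subNorm (G g) c = 0 := by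
    intro c hc
    unfold subNorm
    rw [Finset.sum_congr rfl fun j hj => by rw [hc j hj]]
    simp
  rcases key with h | h
  · have h1 : subNorm (G g) (a + b) = subNorm (G g) a := by
      unfold subNorm
      congr 1
      apply Finset.sum_congr rfl
      intro j hj
      simp [h j hj]
    rw [h1, hzero b h]
    ring
  · have h1 : subNorm (G g) (a + b) = subNorm (G g) b := by
      unfold subNorm
      congr 1
      apply Finset.sum_congr rfl
      intro j hj
      simp [h j hj]
    rw [h1, hzero a h]
    ring
end

section
/- There exist constants c, c', c'' > 0 depending only on c₁ and c₂ such that the following holds. Let G = {G_1,…,G_m} be a group structure on [p] with d_g = |G_g| ≤ c₂ n for every g and log m ≤ c'' n, and let X ∈ ℝ^{n×p} have i.i.d. rows distributed as N(0,Θ) with γ_max(Θ) ≤ c₁. Then with probability at least 1 − e^{−c'n}, max_{g∈[m]} γ_max(X_{G_g}^⊤ X_{G_g}/n) ≤ c². -/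
/-!
Fix a group `G_g` and a unit vector `y` supported on it. The numbers `⟨X_i, y⟩` are independent
centred Gaussians of variance `yᵀΘy ≤ c₁`, so `E exp(⟨X_i, y⟩² / (4c₁)) ≤ 2` and a Chernoff bound
gives `P(∑ᵢ ⟨X_i, y⟩² ≥ K n) ≤ e^{-(K/(4c₁)) n} 2ⁿ`. A volume argument yields a `1/2`-net of the
unit ball of `ℝ^{G_g}` with at most `5^{d_g} ≤ e^{2c₂n}` points, and a bound on a `1/2`-net bounds
the operator norm up to a factor `2`. A union bound over the `m ≤ eⁿ` groups and their nets leaves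
failure probability `e^{-n}` for `K = 4c₁(3 + 2c₂)`, hence `c = 2√K` and `c' = c'' = 1`.
-/

open Finset MeasureTheory ProbabilityTheory

/-- Quadratic form `vᵀAv` of a matrix `A` on `ℝ^p`. -/
def quadForm {p : ℕ} (A : Fin p → Fin p → ℝ) (v : Fin p → ℝ) : ℝ :=
  ∑ j, ∑ k, v j * A j k * v k

open Metric Module Real
open scoped ENNReal NNReal Matrix

section Nets

variable {E : Type*} [NormedAddCommGroup E] [NormedSpace ℝ E]

theorem Finset.card_le_of_isSeparated_of_subset_closedBall [FiniteDimensional ℝ E]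
    {F : Finset E} {x : E} {r : ℝ} {ε : ℝ≥0} (hr : 0 ≤ r) (hε : 0 < ε)
    (hF : (F : Set E) ⊆ closedBall x r) (hsep : IsSeparated ε (F : Set E)) :
    (F.card : ℝ) ≤ (1 + 2 * r / ε) ^ finrank ℝ E := by
  borelize E
  set μ : Measure E := Measure.addHaar
  set δ : ℝ := ε / 2 with hδ
  have hδ0 : 0 < δ := by positivity
  have hdisj : (F : Set E).PairwiseDisjoint (ball · δ) := fun y hy z hz hyz ↦
    ball_disjoint_ball <| by
      have : (ε : ℝ≥0∞) < edist y z := hsep hy hz hyz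
      rw [edist_nndist, ENNReal.coe_lt_coe, ← NNReal.coe_lt_coe, coe_nndist] at this
      linarith
  have hsub : (⋃ y ∈ F, ball y δ) ⊆ ball x (r + δ) := Set.iUnion₂_subset fun y hy ↦
    (ball_subset_ball' (by linarith [mem_closedBall'.mp (hF hy), dist_comm x y]))
  have hvol : (F.card : ℝ≥0∞) * (ENNReal.ofReal (δ ^ finrank ℝ E) * μ (ball 0 1))
      ≤ ENNReal.ofReal ((r + δ) ^ finrank ℝ E) * μ (ball 0 1) := by
    calc (F.card : ℝ≥0∞) * (ENNReal.ofReal (δ ^ finrank ℝ E) * μ (ball 0 1))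
        = ∑ y ∈ F, μ (ball y δ) := by
          simp [μ.addHaar_ball_of_pos _ hδ0]
      _ = μ (⋃ y ∈ F, ball y δ) :=
          (measure_biUnion_finset hdisj fun _ _ ↦ measurableSet_ball).symm
      _ ≤ μ (ball x (r + δ)) := measure_mono hsub
      _ = _ := μ.addHaar_ball_of_pos _ (by positivity)
  rw [← mul_assoc, ENNReal.mul_le_mul_iff_left (measure_ball_pos μ _ one_pos).ne'
    measure_ball_lt_top.ne, ← ENNReal.ofReal_natCast, ← ENNReal.ofReal_mul (by positivity),
    ENNReal.ofReal_le_ofReal_iff (by positivity)] at hvol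
  calc (F.card : ℝ) = F.card * δ ^ finrank ℝ E / δ ^ finrank ℝ E := by field_simp
    _ ≤ (r + δ) ^ finrank ℝ E / δ ^ finrank ℝ E := by gcongr
    _ = (1 + 2 * r / ε) ^ finrank ℝ E := by
        rw [← div_pow]; congr 1; field_simp; ring

theorem packingNumber_half_closedBall_le [FiniteDimensional ℝ E] :
    packingNumber (1 / 2) (closedBall (0 : E) 1) ≤ 5 ^ finrank ℝ E := by
  refine iSup₂_le fun C hC ↦ iSup_le fun hsep ↦ ?_
  by_contra! hlt
  obtain ⟨T, hTC, hT⟩ := Set.exists_subset_encard_eq (Order.add_one_le_of_lt hlt)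
  lift T to Finset E using Set.finite_of_encard_eq_coe hT
  have hcard := Finset.card_le_of_isSeparated_of_subset_closedBall zero_le_one
    (by norm_num : (0 : ℝ≥0) < 1 / 2) (hTC.trans hC) (hsep.subset hTC)
  have hT' : T.card = 5 ^ finrank ℝ E + 1 := by
    exact_mod_cast (Set.encard_coe_eq_coe_finsetCard T).symm.trans hT
  norm_num [hT'] at hcard

theorem exists_finset_isCover_half_closedBall [FiniteDimensional ℝ E] :
    ∃ N : Finset E, (N : Set E) ⊆ closedBall 0 1 ∧ IsCover (1 / 2) (closedBall 0 1) (N : Set E)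
      ∧ N.card ≤ 5 ^ finrank ℝ E := by
  have hpack := packingNumber_half_closedBall_le (E := E)
  have hfin : packingNumber (1 / 2) (closedBall (0 : E) 1) ≠ ⊤ :=
    ne_top_of_le_ne_top (by simp) hpack
  have hS := encard_maximalSeparatedSet hfin
  have hSfin : (maximalSeparatedSet (1 / 2) (closedBall (0 : E) 1)).Finite :=
    Set.finite_of_encard_eq_coe (hS.trans (ENat.natCast_toNat hfin).symm)
  refine ⟨hSfin.toFinset, by simpa using maximalSeparatedSet_subset,
    by simpa using isCover_maximalSeparatedSet hfin, ?_⟩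
  rw [← ENat.natCast_le_natCast, ← hSfin.encard_eq_coe_toFinset_card, hS]
  exact_mod_cast hpack

theorem ContinuousLinearMap.opNorm_le_of_isCover_closedBall {F : Type*} [NormedAddCommGroup F]
    [NormedSpace ℝ F] (T : E →L[ℝ] F) {N : Set E} {ε : ℝ≥0} (hε : ε < 1)
    (hN : IsCover ε (closedBall 0 1) N) {B : ℝ} (hB : ∀ y ∈ N, ‖T y‖ ≤ B) :
    ‖T‖ ≤ B / (1 - ε) := by
  obtain ⟨y₀, hy₀, -⟩ := hN (mem_closedBall_self zero_le_one)
  have hB0 : 0 ≤ B := (norm_nonneg _).trans (hB y₀ hy₀)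
  have hε' : (ε : ℝ) < 1 := hε
  have h : ‖T‖ ≤ B + ε * ‖T‖ := by
    refine T.opNorm_le_of_unit_norm (by positivity) fun x hx ↦ ?_
    obtain ⟨y, hyN, hxy⟩ := hN (mem_closedBall_zero_iff.mpr hx.le)
    have hxy : ‖x - y‖ ≤ ε := by
      rw [← dist_eq_norm, ← coe_nndist]
      exact_mod_cast (edist_le_coe.mp hxy)
    calc ‖T x‖ = ‖T y + T (x - y)‖ := by rw [← map_add, add_sub_cancel]
      _ ≤ ‖T y‖ + ‖T‖ * ‖x - y‖ := norm_add_le_of_le le_rfl (T.le_opNorm _)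
      _ ≤ B + ε * ‖T‖ := by
          rw [mul_comm]
          exact add_le_add (hB y hyN) (mul_le_mul_of_nonneg_right hxy (norm_nonneg _))
  rw [le_div_iff₀ (by linarith)]
  linarith

end Nets

theorem gaussianPDFReal_zero_mul_exp_mul_sq {v : ℝ≥0} (hv : v ≠ 0) (t x : ℝ) :
    gaussianPDFReal 0 v x * exp (t * x ^ 2)
      = (√(2 * π * v))⁻¹ * exp (-((1 - 2 * t * v) / (2 * v)) * x ^ 2) := by
  have : (v : ℝ) ≠ 0 := by exact_mod_cast hv
  rw [gaussianPDFReal_def, mul_assoc, ← exp_add]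
  congr 2
  field_simp
  ring

theorem integrable_exp_mul_sq_gaussianReal {v : ℝ≥0} {t : ℝ} (ht : 2 * t * v < 1) :
    Integrable (fun x ↦ exp (t * x ^ 2)) (gaussianReal 0 v) := by
  rcases eq_or_ne v 0 with rfl | hv
  · rw [gaussianReal_zero_var]
    exact integrable_dirac (by simp)
  have hv' : (0 : ℝ) < v := by positivity
  rw [gaussianReal_of_var_ne_zero 0 hv, integrable_withDensity_iff_integrable_smul'
    (measurable_gaussianPDF 0 v) (ae_of_all _ fun _ ↦ gaussianPDF_lt_top)]
  simp_rw [toReal_gaussianPDF, smul_eq_mul, gaussianPDFReal_zero_mul_exp_mul_sq hv]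
  exact (integrable_exp_neg_mul_sq (by apply div_pos <;> linarith)).const_mul _

theorem integral_exp_mul_sq_gaussianReal {v : ℝ≥0} {t : ℝ} (ht : 2 * t * v < 1) :
    ∫ x, exp (t * x ^ 2) ∂gaussianReal 0 v = (√(1 - 2 * t * v))⁻¹ := by
  rcases eq_or_ne v 0 with rfl | hv
  · simp [gaussianReal_zero_var]
  have hv' : (0 : ℝ) < v := by positivity
  simp_rw [integral_gaussianReal_eq_integral_smul hv, smul_eq_mul,
    gaussianPDFReal_zero_mul_exp_mul_sq hv, integral_const_mul, integral_gaussian]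
  have : 0 < √(2 * π * v) := by positivity
  rw [div_div_eq_mul_div, sqrt_div' _ (by linarith), show π * (2 * v) = 2 * π * v by ring]
  field_simp

section Probability

variable {Ω : Type*} {mΩ : MeasurableSpace Ω} {P : Measure Ω}

theorem integrable_exp_mul_sq_of_map_eq_gaussianReal {Z : Ω → ℝ} {v : ℝ≥0}
    (hZ : P.map Z = gaussianReal 0 v) {t : ℝ} (ht : 2 * t * v < 1) :
    Integrable (fun ω ↦ exp (t * Z ω ^ 2)) P := by
  have hZm : AEMeasurable Z P := aemeasurable_of_map_neZero (by rw [hZ]; infer_instance)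
  have h := integrable_exp_mul_sq_gaussianReal ht
  rw [← hZ] at h
  exact (integrable_map_measure h.aestronglyMeasurable hZm).mp h

theorem mgf_sq_of_map_eq_gaussianReal {Z : Ω → ℝ} {v : ℝ≥0}
    (hZ : P.map Z = gaussianReal 0 v) {t : ℝ} (ht : 2 * t * v < 1) :
    mgf (fun ω ↦ Z ω ^ 2) P t = (√(1 - 2 * t * v))⁻¹ := by
  have hZm : AEMeasurable Z P := aemeasurable_of_map_neZero (by rw [hZ]; infer_instance)
  rw [mgf, ← integral_exp_mul_sq_gaussianReal ht, ← hZ, integral_map hZm (by fun_prop)]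

theorem ProbabilityTheory.iIndepFun.measureReal_sum_ge_le {ι : Type*} [Fintype ι]
    {Y : ι → Ω → ℝ} (hind : iIndepFun Y P) (hmeas : ∀ i, AEMeasurable (Y i) P) {t M : ℝ}
    (ht : 0 ≤ t) (hint : ∀ i, Integrable (fun ω ↦ exp (t * Y i ω)) P)
    (hmgf : ∀ i, mgf (Y i) P t ≤ M) (a : ℝ) : P.real {ω | a ≤ ∑ i, Y i ω} ≤ exp (-t * a) * M ^ Fintype.card ι := by
  have := hind.isProbabilityMeasure
  have hprod : mgf (∑ i, Y i) P t = ∏ i, mgf (Y i) P t := hind.mgf_sum₀ hmeas _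
  -- `mgf` is `0` off the domain of integrability, but here it is a product of positive factors
  have hint_sum : Integrable (fun ω ↦ exp (t * (∑ i, Y i) ω)) P := by
    by_contra h
    have h0 : mgf (∑ i, Y i) P t = 0 := integral_undef h
    rw [hprod] at h0
    exact (prod_pos fun i _ ↦ mgf_pos (hint i)).ne' h0
  calc P.real {ω | a ≤ ∑ i, Y i ω} = P.real {ω | a ≤ (∑ i, Y i) ω} := by simp
    _ ≤ exp (-t * a) * mgf (∑ i, Y i) P t := measure_ge_le_exp_mul_mgf a ht hint_sum
    _ ≤ exp (-t * a) * M ^ Fintype.card ι := by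
        rw [hprod]
        gcongr
        exact (prod_le_prod (fun i _ ↦ mgf_nonneg) fun i _ ↦ hmgf i).trans_eq (by simp)

theorem measure_sum_sq_ge_le_of_iIndepFun {ι : Type*} [Fintype ι] {Z : ι → Ω → ℝ}
    {v : ι → ℝ≥0} {σ : ℝ} (hσ : 0 < σ) (hind : iIndepFun (fun i ω ↦ Z i ω ^ 2) P)
    (hZ : ∀ i, P.map (Z i) = gaussianReal 0 (v i)) (hv : ∀ i, (v i : ℝ) ≤ σ) (a : ℝ) :
    P {ω | a ≤ ∑ i, Z i ω ^ 2} ≤ ENNReal.ofReal (exp (-(a / (4 * σ))) * 2 ^ Fintype.card ι) := by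
  have := hind.isProbabilityMeasure
  have ht : ∀ i, 2 * (1 / (4 * σ)) * v i ≤ 1 / 2 := fun i ↦ by
    rw [show 2 * (1 / (4 * σ)) * v i = v i / σ / 2 by field_simp; ring]
    gcongr
    exact div_le_one_of_le₀ (hv i) hσ.le
  have ht' : ∀ i, 2 * (1 / (4 * σ)) * v i < 1 := fun i ↦ by linarith [ht i]
  have hmgf : ∀ i, mgf (fun ω ↦ Z i ω ^ 2) P (1 / (4 * σ)) ≤ 2 := fun i ↦ by
    rw [mgf_sq_of_map_eq_gaussianReal (hZ i) (ht' i),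
      inv_le_comm₀ (sqrt_pos.2 (by linarith [ht i])) two_pos, le_sqrt' (by norm_num)]
    linarith [ht i]
  have := hind.measureReal_sum_ge_le
    (fun i ↦ (aemeasurable_of_map_neZero (by rw [hZ i]; infer_instance)).pow_const 2)
    (by positivity) (fun i ↦ integrable_exp_mul_sq_of_map_eq_gaussianReal (hZ i) (ht' i)) hmgf a
  rw [ENNReal.le_ofReal_iff_toReal_le (measure_ne_top _ _) (by positivity), ← measureReal_def]
  convert this using 3
  ring

theorem ofReal_one_sub_le_measure_compl [IsProbabilityMeasure P] {s : Set Ω} {q : ℝ}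
    (hq : 0 ≤ q) (hs : P s ≤ ENNReal.ofReal q) : ENNReal.ofReal (1 - q) ≤ P sᶜ := by
  rw [ENNReal.ofReal_sub _ hq, ENNReal.ofReal_one, tsub_le_iff_right]
  calc 1 = P Set.univ := measure_univ.symm
    _ ≤ P s + P sᶜ := measure_univ_le_add_compl s
    _ ≤ P sᶜ + ENNReal.ofReal q := by rw [add_comm]; gcongr

theorem measure_iUnion_biUnion_le {ι : Type*} [Fintype ι] {α : ι → Type*}
    (s : ∀ g, Finset (α g)) (E : ∀ g, α g → Set Ω) {q : ℝ}
    (hE : ∀ g, ∀ y ∈ s g, P (E g y) ≤ ENNReal.ofReal q) :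
    P (⋃ g, ⋃ y ∈ s g, E g y) ≤ ENNReal.ofReal ((∑ g, (s g).card) * q) := by
  calc P (⋃ g, ⋃ y ∈ s g, E g y) ≤ ∑ g, ∑ y ∈ s g, P (E g y) :=
        (measure_iUnion_fintype_le _ _).trans (sum_le_sum fun g _ ↦ measure_biUnion_finset_le _ _)
    _ ≤ ∑ g, ∑ y ∈ s g, ENNReal.ofReal q := by gcongr with g _ y hy; exact hE g y hy
    _ = ENNReal.ofReal ((∑ g, (s g).card) * q) := by
        rw [ENNReal.ofReal_mul (by positivity), ENNReal.ofReal_natCast]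
        simp [Finset.sum_mul]

end Probability

theorem Matrix.sum_sq_mulVec_le_of_isCover {m n : Type*} [Fintype m] [Fintype n]
    [DecidableEq n] (A : Matrix m n ℝ) {N : Set (EuclideanSpace ℝ n)}
    (hN : IsCover (1 / 2) (closedBall 0 1) N) {B : ℝ}
    (hB : ∀ y ∈ N, ∑ i, (A *ᵥ y.ofLp) i ^ 2 ≤ B) (w : n → ℝ) :
    ∑ i, (A *ᵥ w) i ^ 2 ≤ 4 * B * ∑ j, w j ^ 2 := by
  obtain ⟨y₀, hy₀, -⟩ := hN (mem_closedBall_self zero_le_one)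
  have hB0 : 0 ≤ B := (sum_nonneg fun i _ ↦ sq_nonneg _).trans (hB y₀ hy₀)
  set T := LinearMap.toContinuousLinearMap (Matrix.toEuclideanLin A)
  have hT : ∀ x, ‖T x‖ ^ 2 = ∑ i, (A *ᵥ x.ofLp) i ^ 2 := fun x ↦ by
    simp [T, EuclideanSpace.real_norm_sq_eq, Matrix.ofLp_toLpLin]
  have hTnorm : ‖T‖ ≤ 2 * √B := by
    convert T.opNorm_le_of_isCover_closedBall (by norm_num) hN fun y hy ↦
      (abs_norm (T y)).symm.trans_le (abs_le_sqrt ((hT y).trans_le (hB y hy))) using 1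
    norm_num
    ring
  calc ∑ i, (A *ᵥ w) i ^ 2 = ‖T (WithLp.toLp 2 w)‖ ^ 2 := (hT _).symm
    _ ≤ (‖T‖ * ‖WithLp.toLp 2 w‖) ^ 2 := by gcongr; exact T.le_opNorm _
    _ ≤ (2 * √B * ‖WithLp.toLp 2 w‖) ^ 2 := by gcongr
    _ = 4 * B * ∑ j, w j ^ 2 := by
        rw [mul_pow, mul_pow, sq_sqrt hB0, EuclideanSpace.real_norm_sq_eq]
        norm_num

theorem Fintype.sum_extend_val_zero {ι R M : Type*} [Fintype ι] [Zero R] [AddCommMonoid M]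
    (s : Finset ι) (y : s → R) (F : ι → R → M) (hF : ∀ j, F j 0 = 0) :
    ∑ j, F j (Function.extend Subtype.val y 0 j) = ∑ j : s, F j (y j) := by
  classical
  rw [← Finset.sum_subset s.subset_univ fun j _ hj ↦ by
    rw [Function.extend_apply' _ _ _ fun ⟨k, hk⟩ ↦ hj (hk ▸ k.2), Pi.zero_apply, hF],
    ← Finset.sum_coe_sort s]
  simp only [Subtype.val_injective.extend_apply]

theorem sum_sq_sum_mul_le_of_isCover {κ ι : Type*} [Fintype κ] [Fintype ι] (x : κ → ι → ℝ)
    (s : Finset ι) {N : Set (EuclideanSpace ℝ s)} (hN : IsCover (1 / 2) (closedBall 0 1) N)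
    {B : ℝ} (hB : ∀ y ∈ N, ∑ i, (∑ j, Function.extend Subtype.val y.ofLp 0 j * x i j) ^ 2 ≤ B)
    (v : ι → ℝ) : ∑ i, (∑ j ∈ s, x i j * v j) ^ 2 ≤ 4 * B * ∑ j ∈ s, v j ^ 2 := by
  classical
  have := Matrix.sum_sq_mulVec_le_of_isCover (Matrix.of fun i (j : s) ↦ x i j) hN
    (B := B) (fun y hy ↦ ?_) (fun j ↦ v j)
  · simp_rw [← Finset.sum_coe_sort s]
    simpa [Matrix.mulVec, dotProduct] using this
  · convert hB y hy using 4 with i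
    rw [Fintype.sum_extend_val_zero s _ (fun j u ↦ u * x i j) fun j ↦ zero_mul _]
    simp [Matrix.mulVec, dotProduct, mul_comm]

theorem quadForm_extend_val_zero_le {p : ℕ} {Θ : Fin p → Fin p → ℝ} {c : ℝ}
    (hΘ : ∀ v, quadForm Θ v ≤ c * ∑ j, v j ^ 2) (hc : 0 ≤ c) {s : Finset (Fin p)}
    {y : EuclideanSpace ℝ s} (hy : ‖y‖ ≤ 1) :
    quadForm Θ (Function.extend Subtype.val y.ofLp 0) ≤ c := by
  have hnorm : ∑ j, Function.extend Subtype.val y.ofLp 0 j ^ 2 = ‖y‖ ^ 2 := by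
    rw [Fintype.sum_extend_val_zero s _ (fun _ u ↦ u ^ 2) fun _ ↦ zero_pow two_ne_zero,
      EuclideanSpace.real_norm_sq_eq]
  calc quadForm Θ _ ≤ c * ‖y‖ ^ 2 := hnorm ▸ hΘ _
    _ ≤ c := mul_le_of_le_one_right hc (pow_le_one₀ (norm_nonneg y) hy)

theorem measure_sum_sq_row_ge_le {Ω ι : Type*} {mΩ : MeasurableSpace Ω} {P : Measure Ω}
    [Fintype ι] {p : ℕ} {Θ : Fin p → Fin p → ℝ} {X : Ω → ι → Fin p → ℝ}
    (hX : ∀ i (t : Fin p → ℝ),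
      P.map (fun ω ↦ ∑ j, t j * X ω i j) = gaussianReal 0 (quadForm Θ t).toNNReal)
    (hind : iIndepFun (fun i ω ↦ X ω i) P) {σ : ℝ} (hσ : 0 < σ) {t : Fin p → ℝ}
    (ht : quadForm Θ t ≤ σ) (a : ℝ) :
    P {ω | a ≤ ∑ i, (∑ j, t j * X ω i j) ^ 2}
      ≤ ENNReal.ofReal (exp (-(a / (4 * σ))) * 2 ^ Fintype.card ι) :=
  measure_sum_sq_ge_le_of_iIndepFun hσ
    (hind.comp (fun _ r ↦ (∑ j, t j * r j) ^ 2) fun _ ↦ by fun_prop) (fun i ↦ hX i t)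
    (fun _ ↦ by rw [Real.coe_toNNReal']; exact max_le ht hσ.le) a

theorem pow_le_exp_mul_of_le_exp {b c : ℝ} (hb : 0 ≤ b) (h : b ≤ exp c) (d : ℕ) :
    b ^ d ≤ exp (c * d) := by
  rw [mul_comm, exp_nat_mul]
  gcongr

theorem natCast_le_exp_of_log_le {m : ℕ} {y : ℝ} (h : log m ≤ y) : (m : ℝ) ≤ exp y := by
  rcases m.eq_zero_or_pos with rfl | hm
  · simpa using (exp_pos y).le
  · exact (log_le_iff_le_exp (by positivity)).1 h

theorem sum_mul_exp_neg_mul_two_pow_le {m n : ℕ} {c₂ : ℝ} (d k : Fin m → ℕ)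
    (hk : ∀ g, k g ≤ 5 ^ d g) (hd : ∀ g, (d g : ℝ) ≤ c₂ * n) (hm : log m ≤ n) :
    ((∑ g, k g : ℕ) : ℝ) * (exp (-((3 + 2 * c₂) * n)) * 2 ^ n) ≤ exp (-n) := by
  have hk' : ∀ g, (k g : ℝ) ≤ exp (2 * (c₂ * n)) := fun g ↦
    calc (k g : ℝ) ≤ 5 ^ d g := by exact_mod_cast hk g
      _ ≤ exp (2 * d g) := pow_le_exp_mul_of_le_exp (by norm_num)
          (by linarith [quadratic_le_exp_of_nonneg zero_le_two]) _
      _ ≤ exp (2 * (c₂ * n)) := by gcongr; exact hd g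
  have h2 : (2 : ℝ) ^ n ≤ exp (1 * n) :=
    pow_le_exp_mul_of_le_exp zero_le_two (by linarith [add_one_le_exp 1]) n
  calc ((∑ g, k g : ℕ) : ℝ) * (exp (-((3 + 2 * c₂) * n)) * 2 ^ n)
      ≤ (m * exp (2 * (c₂ * n))) * (exp (-((3 + 2 * c₂) * n)) * exp (1 * n)) := by
        push_cast
        gcongr
        exact (sum_le_card_nsmul _ _ _ fun g _ ↦ hk' g).trans_eq (by simp)
    _ ≤ exp n * exp (2 * (c₂ * n)) * (exp (-((3 + 2 * c₂) * n)) * exp (1 * n)) := by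
        gcongr
        exact natCast_le_exp_of_log_le hm
    _ = exp (-n) := by
        simp only [← exp_add]
        ring_nf

/-- for a Gaussian random design with i.i.d. rows `N(0,Θ)`,
`γ_max(Θ) ≤ c₁`, group sizes `d_g ≤ c₂ n`, and `log m ≤ c'' n`, with probability
at least `1 − e^{−c'n}` all groupwise sample covariance blocks satisfy
`γ_max(X_{G_g}ᵀX_{G_g}/n) ≤ c²`, where `c, c', c''` depend only on `c₁, c₂`.
(For symmetric matrices, the eigenvalue bounds are expressed through the
associated quadratic forms.) -/
theorem group_operator_norm_bound :
    ∀ c₁ c₂ : ℝ, 0 < c₁ → 0 < c₂ →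
    ∃ c c' c'' : ℝ, 0 < c ∧ 0 < c' ∧ 0 < c'' ∧
      ∀ (n p m : ℕ) (G : Fin m → Finset (Fin p)),
        (∀ j : Fin p, ∃ g, j ∈ G g) →
        (∀ g, ((G g).card : ℝ) ≤ c₂ * n) →
        Real.log m ≤ c'' * n →
        ∀ (Θ : Fin p → Fin p → ℝ),
          (∀ j k, Θ j k = Θ k j) →
          (∀ v : Fin p → ℝ, 0 ≤ quadForm Θ v ∧ quadForm Θ v ≤ c₁ * ∑ j, v j ^ 2) →
        ∀ (Ω : Type) (_ : MeasurableSpace Ω) (P : Measure Ω),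
          IsProbabilityMeasure P →
          ∀ (X : Ω → Fin n → Fin p → ℝ),
          (∀ (i : Fin n) (t : Fin p → ℝ),
            Measure.map (fun ω => ∑ j, t j * X ω i j) P
              = gaussianReal 0 (Real.toNNReal (quadForm Θ t))) →
          iIndepFun (fun i ω => X ω i) P →
          ENNReal.ofReal (1 - Real.exp (-(c' * n)))
            ≤ P {ω | ∀ g : Fin m, ∀ v : Fin p → ℝ,
                (∑ i, (∑ j ∈ G g, X ω i j * v j) ^ 2) / n ≤ c ^ 2 * ∑ j ∈ G g, v j ^ 2} := by
  intro c₁ c₂ hc₁ hc₂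
  set K := 4 * c₁ * (3 + 2 * c₂)
  refine ⟨2 * √K, 1, 1, by positivity, one_pos, one_pos, ?_⟩
  intro n p m G _ hG hm Θ _ hΘ Ω _ P _ X hX hind
  choose N hN_ball hN_cover hN_card using
    fun g ↦ exists_finset_isCover_half_closedBall (E := EuclideanSpace ℝ (G g))
  set bad := ⋃ g, ⋃ y ∈ N g,
    {ω | K * n ≤ ∑ i, (∑ j, Function.extend Subtype.val y.ofLp 0 j * X ω i j) ^ 2}
  have hbad : P bad ≤ ENNReal.ofReal (exp (-(1 * n))) := by
    refine (measure_iUnion_biUnion_le N _ (q := exp (-((3 + 2 * c₂) * n)) * 2 ^ n)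
      fun g y hy ↦ ?_).trans (ENNReal.ofReal_le_ofReal ?_)
    · refine (measure_sum_sq_row_ge_le hX hind hc₁ (quadForm_extend_val_zero_le
        (fun v ↦ (hΘ v).2) hc₁.le (mem_closedBall_zero_iff.mp (hN_ball g hy))) (K * n)).trans_eq ?_
      rw [Fintype.card_fin, show K * n / (4 * c₁) = (3 + 2 * c₂) * n by field_simp [K]; ring]
    · simpa using sum_mul_exp_neg_mul_two_pow_le (fun g ↦ (G g).card) (fun g ↦ (N g).card)
        (fun g ↦ by simpa using hN_card g) hG (by linarith)
  have hgood : badᶜ ⊆ {ω | ∀ g : Fin m, ∀ v : Fin p → ℝ,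
      (∑ i, (∑ j ∈ G g, X ω i j * v j) ^ 2) / n ≤ (2 * √K) ^ 2 * ∑ j ∈ G g, v j ^ 2} :=
    fun ω hω g v ↦ by
      have hB : ∀ y ∈ N g, ∑ i, (∑ j, Function.extend Subtype.val y.ofLp 0 j * X ω i j) ^ 2
          ≤ K * n := fun y hy ↦
        (not_le.mp fun h ↦ hω (Set.mem_iUnion.2 ⟨g, Set.mem_iUnion₂.2 ⟨y, hy, h⟩⟩)).le
      rw [mul_pow, sq_sqrt (by positivity)]
      refine div_le_of_le_mul₀ (by positivity) (by positivity) ?_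
      exact (sum_sq_sum_mul_le_of_isCover (fun i j ↦ X ω i j) (G g) (hN_cover g) hB v).trans_eq
        (by ring)
  calc ENNReal.ofReal (1 - exp (-(1 * n))) ≤ P badᶜ :=
        ofReal_one_sub_le_measure_compl (by positivity) hbad
    _ ≤ _ := measure_mono hgood
end
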